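/- arXiv:1805.06579 — 8 statements merged into one kernel-verified Lean document; each statement's English description precedes it below -/
import Mathlib

section
/- Let X : [t₀, ∞) → ℝⁿ (with t₀ > 0) be a continuously differentiable solution of the ADMM flow AᵀA Ẋ(t) + ∇V(X(t)) = 0, and let X⋆ be a minimizer of V with V⋆ = V(X⋆). Then for all t ≥ t₀, V(X(t)) − V⋆ ≤ C/t, where C = t₀·(V(X(t₀)) − V⋆) + ½‖A(X(t₀) − X⋆)‖². -/
/-
Along the flow the energy `E(t) = t (V(X t) - V⋆) + ½ ‖A (X t - X⋆)‖²` is nonincreasing. Its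
derivative is `V(X) - V⋆ - t ‖A Ẋ‖² + ⟪∇V(X), X⋆ - X⟫`, because `⟪A (X - X⋆), A Ẋ⟫ = ⟪AᵀA Ẋ, X - X⋆⟫`
and `AᵀA Ẋ = -∇V(X)`; the first-order characterisation of convexity bounds the last term by
`V⋆ - V(X)`. Hence `t (V(X t) - V⋆) ≤ E(t) ≤ E(t₀)`.
-/

open Matrix Set

open scoped RealInnerProductSpace

theorem ConvexOn.le_sub_of_hasFDerivAt {E : Type*} [NormedAddCommGroup E] [NormedSpace ℝ E]
    {f : E → ℝ} {f' : E →L[ℝ] ℝ} {s : Set E} {x y : E} (hf : ConvexOn ℝ s f)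
    (hx : x ∈ s) (hy : y ∈ s) (hf' : HasFDerivAt f f' x) :
    f' (y - x) ≤ f y - f x := by
  have hline := hf.comp_affineMap (AffineMap.lineMap (k := ℝ) x y)
  have hderiv : HasDerivAt (f ∘ AffineMap.lineMap (k := ℝ) x y) (f' (y - x)) 0 :=
    HasFDerivAt.comp_hasDerivAt (0 : ℝ) (by simpa using hf') AffineMap.hasDerivAt_lineMap
  have := hline.le_slope_of_hasDerivAt (by simpa using hx) (by simpa using hy) one_pos hderiv
  simpa [slope_def_field] using this

theorem Matrix.inner_toEuclideanLin_transpose_mul_self {m n : Type*} [Fintype m] [Fintype n]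
    [DecidableEq n] (A : Matrix m n ℝ) (u v : EuclideanSpace ℝ n) :
    ⟪toEuclideanLin (Aᵀ * A) u, v⟫ = ⟪toEuclideanLin A u, toEuclideanLin A v⟫ := by
  simp only [toLpLin_apply, EuclideanSpace.inner_eq_star_dotProduct, star_trivial]
  rw [← mulVec_mulVec, dotProduct_mulVec, vecMul_transpose]

section ADMMEnergy

variable {E F : Type*} [NormedAddCommGroup E] [InnerProductSpace ℝ E]
  [NormedAddCommGroup F] [InnerProductSpace ℝ F]

noncomputable def admmEnergy (V : E → ℝ) (B : E →L[ℝ] F) (X : ℝ → E) (xstar : E) (t : ℝ) : ℝ :=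
  t * (V (X t) - V xstar) + 1 / 2 * ‖B (X t - xstar)‖ ^ 2

variable {V : E → ℝ} {V' : E →L[ℝ] ℝ} {B : E →L[ℝ] F} {X : ℝ → E} {xstar x x' : E} {t : ℝ}

theorem hasDerivAt_admmEnergy (hV : HasFDerivAt V V' (X t)) (hX : HasDerivAt X x' t) :
    HasDerivAt (admmEnergy V B X xstar)
      (V (X t) - V xstar + t * V' x' + ⟪B (X t - xstar), B x'⟫) t := by
  have hVX : HasDerivAt (fun s => V (X s)) (V' x') t := hV.comp_hasDerivAt t hX
  have hBX : HasDerivAt (fun s => B (X s - xstar)) (B x') t := by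
    simpa using (B.hasFDerivAt.comp_hasDerivAt t hX).sub_const (B xstar)
  refine (((hasDerivAt_id t).mul (hVX.sub_const (V xstar))).add
    (hBX.norm_sq.const_mul (1 / 2))).congr_deriv ?_
  simp only [id_eq]
  ring

theorem admmEnergy_deriv_nonpos (hV : ConvexOn ℝ univ V) (hV' : HasFDerivAt V V' x)
    (hflow : ∀ v, V' v = -⟪B x', B v⟫) (ht : 0 ≤ t) :
    V x - V xstar + t * V' x' + ⟪B (x - xstar), B x'⟫ ≤ 0 := by
  have hconv : ⟪B (x - xstar), B x'⟫ ≤ V xstar - V x := by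
    calc ⟪B (x - xstar), B x'⟫ = V' (xstar - x) := by
          rw [hflow, ← neg_sub xstar x, map_neg, inner_neg_left, real_inner_comm]
      _ ≤ V xstar - V x := hV.le_sub_of_hasFDerivAt (mem_univ x) (mem_univ xstar) hV'
  have hdescent : t * V' x' ≤ 0 := by
    rw [hflow]
    exact mul_nonpos_of_nonneg_of_nonpos ht (neg_nonpos.2 real_inner_self_nonneg)
  linarith

theorem antitoneOn_admmEnergy {X' : ℝ → E} {t₀ : ℝ} (hV : ConvexOn ℝ univ V)
    (hVd : Differentiable ℝ V) (ht₀ : 0 ≤ t₀) (hX : ∀ t ∈ Ici t₀, HasDerivAt X (X' t) t)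
    (hflow : ∀ t ∈ Ici t₀, ∀ v, fderiv ℝ V (X t) v = -⟪B (X' t), B v⟫) :
    AntitoneOn (admmEnergy V B X xstar) (Ici t₀) := by
  have hderiv := fun t (ht : t ∈ Ici t₀) ↦
    hasDerivAt_admmEnergy (B := B) (xstar := xstar) (hVd (X t)).hasFDerivAt (hX t ht)
  refine antitoneOn_of_hasDerivWithinAt_nonpos (convex_Ici t₀)
    (fun t ht ↦ (hderiv t ht).continuousAt.continuousWithinAt)
    (fun t ht ↦ (hderiv t (interior_subset ht)).hasDerivWithinAt) fun t ht ↦ ?_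
  rw [interior_Ici, mem_Ioi] at ht
  exact admmEnergy_deriv_nonpos hV (hVd (X t)).hasFDerivAt (hflow t ht.le) (ht₀.trans ht.le)

end ADMMEnergy

theorem admm_flow_convergence_rate_general
    {m n : ℕ}
    (f : EuclideanSpace ℝ (Fin n) → ℝ) (g : EuclideanSpace ℝ (Fin m) → ℝ)
    (hf : ContDiff ℝ 1 f) (hg : ContDiff ℝ 1 g)
    (hfconv : ConvexOn ℝ Set.univ f) (hgconv : ConvexOn ℝ Set.univ g)
    (A : Matrix (Fin m) (Fin n) ℝ)
    (V : EuclideanSpace ℝ (Fin n) → ℝ)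
    (hV : ∀ x, V x = f x + g (Matrix.toEuclideanLin A x))
    (t₀ : ℝ) (ht₀ : 0 < t₀)
    (X X' : ℝ → EuclideanSpace ℝ (Fin n))
    (hX : ∀ t ∈ Set.Ici t₀, HasDerivAt X (X' t) t)
    (hflow : ∀ t ∈ Set.Ici t₀,
      Matrix.toEuclideanLin (Aᵀ * A) (X' t) + gradient V (X t) = 0)
    (Xstar : EuclideanSpace ℝ (Fin n))
    (Vstar : ℝ) (hVstar : Vstar = V Xstar) :
    ∀ t ∈ Set.Ici t₀,
      V (X t) - Vstar ≤
        (t₀ * (V (X t₀) - Vstar)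
          + (1 / 2) * ‖Matrix.toEuclideanLin A (X t₀ - Xstar)‖ ^ 2) / t := by
  intro t ht
  subst hVstar
  let B := LinearMap.toContinuousLinearMap (Matrix.toEuclideanLin A)
  have hVeq : V = f + g ∘ B := funext hV
  have hVconv : ConvexOn ℝ univ V := hVeq ▸ hfconv.add (hgconv.comp_linearMap _)
  have hVdiff : Differentiable ℝ V := hVeq ▸
    (hf.differentiable one_ne_zero).add ((hg.differentiable one_ne_zero).comp B.differentiable)
  have hgradient : ∀ s ∈ Ici t₀, ∀ v, fderiv ℝ V (X s) v = -⟪B (X' s), B v⟫ := by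
    intro s hs v
    rw [← inner_gradient_left, eq_neg_of_add_eq_zero_right (hflow s hs), inner_neg_left,
      inner_toEuclideanLin_transpose_mul_self]
    rfl
  have hanti := antitoneOn_admmEnergy (xstar := Xstar) hVconv hVdiff ht₀.le hX hgradient
  rw [le_div_iff₀ (ht₀.trans_le ht)]
  calc (V (X t) - V Xstar) * t ≤ admmEnergy V B X Xstar t := by
        unfold admmEnergy
        nlinarith [sq_nonneg ‖B (X t - Xstar)‖]
    _ ≤ admmEnergy V B X Xstar t₀ := hanti self_mem_Ici ht ht

/-- **Convergence rate of the ADMM flow.**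
If `X` is a continuously differentiable solution of the ADMM flow
`AᵀA Ẋ(t) + ∇V(X(t)) = 0` on `[t₀, ∞)` (with `t₀ > 0`), where
`V(x) = f(x) + g(Ax)` with `f, g` continuously differentiable convex functions and
`A` of full column rank, and `X⋆` is a minimizer of `V`, then
`V(X(t)) − V⋆ ≤ C / t` for all `t ≥ t₀`, where
`C = t₀ (V(X(t₀)) − V⋆) + ½ ‖A(X(t₀) − X⋆)‖²`. -/
theorem admm_flow_convergence_rate
    {m n : ℕ} (hmn : n ≤ m)
    (f : EuclideanSpace ℝ (Fin n) → ℝ) (g : EuclideanSpace ℝ (Fin m) → ℝ)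
    (hf : ContDiff ℝ 1 f) (hg : ContDiff ℝ 1 g)
    (hfconv : ConvexOn ℝ Set.univ f) (hgconv : ConvexOn ℝ Set.univ g)
    (A : Matrix (Fin m) (Fin n) ℝ) (hA : A.rank = n)
    (V : EuclideanSpace ℝ (Fin n) → ℝ)
    (hV : ∀ x, V x = f x + g (Matrix.toEuclideanLin A x))
    (t₀ : ℝ) (ht₀ : 0 < t₀)
    (X X' : ℝ → EuclideanSpace ℝ (Fin n))
    (hX : ∀ t ∈ Set.Ici t₀, HasDerivAt X (X' t) t)
    (hX' : ContinuousOn X' (Set.Ici t₀))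
    (hflow : ∀ t ∈ Set.Ici t₀,
      Matrix.toEuclideanLin (Aᵀ * A) (X' t) + gradient V (X t) = 0)
    (Xstar : EuclideanSpace ℝ (Fin n)) (hXstar : ∀ x, V Xstar ≤ V x)
    (Vstar : ℝ) (hVstar : Vstar = V Xstar) :
    ∀ t ∈ Set.Ici t₀,
      V (X t) - Vstar ≤
        (t₀ * (V (X t₀) - Vstar)
          + (1 / 2) * ‖Matrix.toEuclideanLin A (X t₀ - Xstar)‖ ^ 2) / t :=
  admm_flow_convergence_rate_general f g hf hg hfconv hgconv A V hV t₀ ht₀ X X' hX hflow Xstar Vstar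
    hVstar
end

section
/- Let X : [t₀, ∞) → ℝⁿ (with t₀ > 0) be a continuously differentiable solution of the ADMM flow AᵀA Ẋ(t) + ∇V(X(t)) = 0, let X⋆ be a minimizer of V, and define E(t) = t·(V(X(t)) − V(X⋆)) + ½‖A(X(t) − X⋆)‖². Then E is nonincreasing on [t₀, ∞); in fact Ė(t) = −t‖AẊ(t)‖² + V(X(t)) − V(X⋆) + ⟨X⋆ − X(t), ∇V(X(t))⟩ ≤ 0 for all t ≥ t₀. -/
open Matrix Set RealInnerProductSpace

/-!
Along the flow `L† L Ẋ + ∇V(X) = 0` (here `L = A`, so `L† L = AᵀA`) one has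
`⟪∇V(X), u⟫ = -⟪L Ẋ, L u⟫` for every `u`. Taking `u = Ẋ` and `u = X - X⋆` in the product-rule
derivative `Ė = V(X) - V(X⋆) + t ⟪∇V(X), Ẋ⟫ + ⟪L (X - X⋆), L Ẋ⟫` gives the stated formula for `Ė`.
It is nonpositive because `t ≥ 0` and, by convexity, `V(X) + ⟪∇V(X), X⋆ - X⟫ ≤ V(X⋆)`.
-/

theorem ConvexOn.add_fderiv_sub_le {E : Type*} [NormedAddCommGroup E] [NormedSpace ℝ E]
    {S : Set E} {φ : E → ℝ} {φ' : E →L[ℝ] ℝ} {x y : E}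
    (hφ : ConvexOn ℝ S φ) (hx : x ∈ S) (hy : y ∈ S) (hφ' : HasFDerivAt φ φ' x) :
    φ x + φ' (y - x) ≤ φ y := by
  let c : ℝ →ᵃ[ℝ] E := AffineMap.lineMap x y
  have hderiv : HasDerivAt (φ ∘ c) (φ' (y - x)) 0 :=
    hφ'.comp_hasDerivAt_of_eq 0 AffineMap.hasDerivAt_lineMap (by simp [c])
  have hslope := (hφ.comp_affineMap c).le_slope_of_hasDerivAt (by simpa [c] using hx)
    (by simpa [c] using hy) one_pos hderiv
  simp only [slope_def_field, Function.comp_apply, c, AffineMap.lineMap_apply_zero,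
    AffineMap.lineMap_apply_one, sub_zero, div_one] at hslope
  linarith

theorem Matrix.toEuclideanLin_transpose_mul_self {m n : Type*} [Fintype m] [Fintype n]
    [DecidableEq m] [DecidableEq n] (A : Matrix m n ℝ) :
    toEuclideanLin (Aᵀ * A) = (toEuclideanLin A).adjoint ∘ₗ toEuclideanLin A := by
  rw [← toEuclideanLin_conjTranspose_eq_adjoint, conjTranspose_eq_transpose_of_trivial]
  exact toLpLin_mul 2 2 2 Aᵀ A

section ADMMFlow

variable {E F : Type*} [NormedAddCommGroup E] [InnerProductSpace ℝ E] [CompleteSpace E]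
  [NormedAddCommGroup F] [InnerProductSpace ℝ F]

noncomputable def admmLyapunov (V : E → ℝ) (L : E →L[ℝ] F) (xstar : E) (X : ℝ → E) (t : ℝ) :
    ℝ :=
  t * (V (X t) - V xstar) + 1 / 2 * ‖L (X t - xstar)‖ ^ 2

theorem hasDerivAt_admmLyapunov {V : E → ℝ} (L : E →L[ℝ] F) (xstar : E) {X : ℝ → E}
    {x' : E} {t : ℝ} (hV : DifferentiableAt ℝ V (X t)) (hX : HasDerivAt X x' t) :
    HasDerivAt (admmLyapunov V L xstar X)
      (V (X t) - V xstar + t * ⟪gradient V (X t), x'⟫ + ⟪L (X t - xstar), L x'⟫) t := by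
  have hVX : HasDerivAt (fun s ↦ V (X s)) ⟪gradient V (X t), x'⟫ t := by
    simpa [Function.comp_def] using hV.hasGradientAt.hasFDerivAt.comp_hasDerivAt t hX
  have hLX : HasDerivAt (fun s ↦ L (X s - xstar)) (L x') t :=
    L.hasFDerivAt.comp_hasDerivAt t (hX.sub_const xstar)
  refine (((hasDerivAt_id' t).mul (hVX.sub_const (V xstar))).add
    (hLX.norm_sq.const_mul (1 / 2))).congr_deriv ?_
  ring

theorem hasDerivAt_admmLyapunov_of_flow [CompleteSpace F] {V : E → ℝ} (L : E →L[ℝ] F)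
    (xstar : E) {X : ℝ → E} {x' : E} {t : ℝ} (hV : DifferentiableAt ℝ V (X t))
    (hX : HasDerivAt X x' t) (hflow : L.adjoint (L x') + gradient V (X t) = 0) :
    HasDerivAt (admmLyapunov V L xstar X)
      (-t * ‖L x'‖ ^ 2 + (V (X t) - V xstar) + ⟪xstar - X t, gradient V (X t)⟫) t := by
  have hgrad : ∀ u, ⟪gradient V (X t), u⟫ = -⟪L x', L u⟫ := fun u ↦ by
    rw [eq_neg_of_add_eq_zero_right hflow, inner_neg_left, L.adjoint_inner_left]
  have hcross : ⟪xstar - X t, gradient V (X t)⟫ = ⟪L (X t - xstar), L x'⟫ := by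
    rw [real_inner_comm, ← neg_sub, inner_neg_right, hgrad, neg_neg, real_inner_comm]
  convert hasDerivAt_admmLyapunov L xstar hV hX using 1
  rw [hgrad, hcross, real_inner_self_eq_norm_sq]
  ring

theorem admmLyapunov_deriv_nonpos {V : E → ℝ} (hconv : ConvexOn ℝ univ V) (L : E →L[ℝ] F)
    (xstar x x' : E) {t : ℝ} (ht : 0 ≤ t) (hV : DifferentiableAt ℝ V x) :
    -t * ‖L x'‖ ^ 2 + (V x - V xstar) + ⟪xstar - x, gradient V x⟫ ≤ 0 := by
  have hsupport :=
    hconv.add_fderiv_sub_le (mem_univ x) (mem_univ xstar) hV.hasGradientAt.hasFDerivAt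
  rw [InnerProductSpace.toDual_apply_apply, real_inner_comm] at hsupport
  linarith [mul_nonneg ht (sq_nonneg ‖L x'‖)]

theorem antitoneOn_admmLyapunov [CompleteSpace F] {V : E → ℝ} (hconv : ConvexOn ℝ univ V)
    (hV : Differentiable ℝ V) (L : E →L[ℝ] F) (xstar : E) {X X' : ℝ → E} {t₀ : ℝ}
    (ht₀ : 0 ≤ t₀) (hX : ∀ t ∈ Ici t₀, HasDerivAt X (X' t) t)
    (hflow : ∀ t ∈ Ici t₀, L.adjoint (L (X' t)) + gradient V (X t) = 0) :
    AntitoneOn (admmLyapunov V L xstar X) (Ici t₀) := by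
  have hderiv := fun t (ht : t ∈ Ici t₀) ↦
    hasDerivAt_admmLyapunov_of_flow L xstar (hV (X t)) (hX t ht) (hflow t ht)
  refine antitoneOn_of_hasDerivWithinAt_nonpos (convex_Ici t₀)
    (fun t ht ↦ (hderiv t ht).continuousAt.continuousWithinAt)
    (fun t ht ↦ (hderiv t (interior_subset ht)).hasDerivWithinAt) fun t ht ↦ ?_
  have ht : t₀ ≤ t := interior_subset ht
  exact admmLyapunov_deriv_nonpos hconv L xstar _ _ (ht₀.trans ht) (hV (X t))

end ADMMFlow

theorem admm_flow_lyapunov_nonincreasing_general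
    {m n : ℕ}
    (f : EuclideanSpace ℝ (Fin n) → ℝ) (g : EuclideanSpace ℝ (Fin m) → ℝ)
    (hf : ContDiff ℝ 1 f) (hg : ContDiff ℝ 1 g)
    (hfconv : ConvexOn ℝ Set.univ f) (hgconv : ConvexOn ℝ Set.univ g)
    (A : Matrix (Fin m) (Fin n) ℝ)
    (V : EuclideanSpace ℝ (Fin n) → ℝ)
    (hV : ∀ x, V x = f x + g (Matrix.toEuclideanLin A x))
    (t₀ : ℝ) (ht₀ : 0 < t₀)
    (X X' : ℝ → EuclideanSpace ℝ (Fin n))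
    (hX : ∀ t ∈ Set.Ici t₀, HasDerivAt X (X' t) t)
    (hflow : ∀ t ∈ Set.Ici t₀,
      Matrix.toEuclideanLin (Aᵀ * A) (X' t) + gradient V (X t) = 0)
    (Xstar : EuclideanSpace ℝ (Fin n))
    (E : ℝ → ℝ)
    (hE : ∀ t, E t = t * (V (X t) - V Xstar)
      + (1 / 2) * ‖Matrix.toEuclideanLin A (X t - Xstar)‖ ^ 2) :
    AntitoneOn E (Set.Ici t₀) ∧
      ∀ t ∈ Set.Ici t₀,
        HasDerivAt E
          (-t * ‖Matrix.toEuclideanLin A (X' t)‖ ^ 2 + (V (X t) - V Xstar)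
            + ⟪Xstar - X t, gradient V (X t)⟫) t ∧
        -t * ‖Matrix.toEuclideanLin A (X' t)‖ ^ 2 + (V (X t) - V Xstar)
            + ⟪Xstar - X t, gradient V (X t)⟫ ≤ 0 := by
  set L := (toEuclideanLin A).toContinuousLinearMap
  have hVeq : V = fun x ↦ f x + g (L x) := funext hV
  have hVconv : ConvexOn ℝ univ V :=
    hVeq ▸ hfconv.add (by simpa [Function.comp_def] using hgconv.comp_affineMap L.toAffineMap)
  have hVdiff : Differentiable ℝ V := hVeq ▸
    (hf.differentiable one_ne_zero).add ((hg.differentiable one_ne_zero).comp L.differentiable)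
  have hflowL : ∀ t ∈ Ici t₀, L.adjoint (L (X' t)) + gradient V (X t) = 0 := fun t ht ↦ by
    have := hflow t ht
    rwa [toEuclideanLin_transpose_mul_self, LinearMap.comp_apply,
      LinearMap.adjoint_eq_toCLM_adjoint] at this
  obtain rfl : E = admmLyapunov V L Xstar X := funext hE
  exact ⟨antitoneOn_admmLyapunov hVconv hVdiff L Xstar ht₀.le hX hflowL, fun t ht ↦
    ⟨hasDerivAt_admmLyapunov_of_flow L Xstar (hVdiff _) (hX t ht) (hflowL t ht),
      admmLyapunov_deriv_nonpos hVconv L Xstar _ _ (ht₀.le.trans ht) (hVdiff _)⟩⟩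

/-- **The Lyapunov function of the ADMM flow is nonincreasing.**
If `X` is a continuously differentiable solution of the ADMM flow
`AᵀA Ẋ(t) + ∇V(X(t)) = 0` on `[t₀, ∞)` (with `t₀ > 0`), `X⋆` is a minimizer of `V`,
and `E(t) = t (V(X(t)) − V(X⋆)) + ½‖A(X(t) − X⋆)‖²`, then `E` is nonincreasing on
`[t₀, ∞)`; in fact `Ė(t) = −t‖AẊ(t)‖² + V(X(t)) − V(X⋆) + ⟨X⋆ − X(t), ∇V(X(t))⟩ ≤ 0`
for all `t ≥ t₀`. -/
theorem admm_flow_lyapunov_nonincreasing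
    {m n : ℕ} (hmn : n ≤ m)
    (f : EuclideanSpace ℝ (Fin n) → ℝ) (g : EuclideanSpace ℝ (Fin m) → ℝ)
    (hf : ContDiff ℝ 1 f) (hg : ContDiff ℝ 1 g)
    (hfconv : ConvexOn ℝ Set.univ f) (hgconv : ConvexOn ℝ Set.univ g)
    (A : Matrix (Fin m) (Fin n) ℝ) (hA : A.rank = n)
    (V : EuclideanSpace ℝ (Fin n) → ℝ)
    (hV : ∀ x, V x = f x + g (Matrix.toEuclideanLin A x))
    (t₀ : ℝ) (ht₀ : 0 < t₀)
    (X X' : ℝ → EuclideanSpace ℝ (Fin n))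
    (hX : ∀ t ∈ Set.Ici t₀, HasDerivAt X (X' t) t)
    (hX' : ContinuousOn X' (Set.Ici t₀))
    (hflow : ∀ t ∈ Set.Ici t₀,
      Matrix.toEuclideanLin (Aᵀ * A) (X' t) + gradient V (X t) = 0)
    (Xstar : EuclideanSpace ℝ (Fin n)) (hXstar : ∀ x, V Xstar ≤ V x)
    (E : ℝ → ℝ)
    (hE : ∀ t, E t = t * (V (X t) - V Xstar)
      + (1 / 2) * ‖Matrix.toEuclideanLin A (X t - Xstar)‖ ^ 2) :
    AntitoneOn E (Set.Ici t₀) ∧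
      ∀ t ∈ Set.Ici t₀,
        HasDerivAt E
          (-t * ‖Matrix.toEuclideanLin A (X' t)‖ ^ 2 + (V (X t) - V Xstar)
            + ⟪Xstar - X t, gradient V (X t)⟫) t ∧
        -t * ‖Matrix.toEuclideanLin A (X' t)‖ ^ 2 + (V (X t) - V Xstar)
            + ⟪Xstar - X t, gradient V (X t)⟫ ≤ 0 :=
  admm_flow_lyapunov_nonincreasing_general f g hf hg hfconv hgconv A V hV t₀ ht₀ X X' hX hflow Xstar
    E hE
end

section
/- Let X : I → ℝⁿ be a continuously differentiable solution of the ADMM flow AᵀA Ẋ(t) + ∇V(X(t)) = 0 on an interval I. If ∇V(X(t)) ≠ 0 at some t ∈ I, then the derivative of s ↦ V(X(s)) at s = t is strictly negative. -/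
open Matrix Set

/-! By the chain rule, `d/ds V(X s) = ⟪∇V(X t), Ẋ t⟫` at `s = t`, and the flow gives
`∇V(X t) = -AᵀA Ẋ t`, so this derivative equals `-‖A Ẋ t‖²`. It cannot vanish: `A Ẋ t = 0`
would force `∇V(X t) = 0`. -/

theorem Matrix.toEuclideanLin_conjTranspose_mul_self {𝕜 m n : Type*} [RCLike 𝕜]
    [Fintype m] [Fintype n] [DecidableEq m] [DecidableEq n] (A : Matrix m n 𝕜) :
    toEuclideanLin (Aᴴ * A) = (toEuclideanLin A).adjoint ∘ₗ toEuclideanLin A := by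
  rw [← toEuclideanLin_conjTranspose_eq_adjoint]
  ext v : 1
  simp [toLpLin_apply, mulVec_mulVec]

theorem HasGradientAt.hasDerivAt_comp {E : Type*} [NormedAddCommGroup E] [InnerProductSpace ℝ E]
    [CompleteSpace E] {V : E → ℝ} {X : ℝ → E} {G X' : E} {t : ℝ}
    (hV : HasGradientAt V G (X t)) (hX : HasDerivAt X X' t) :
    HasDerivAt (fun s => V (X s)) (inner ℝ G X') t :=
  hV.hasFDerivAt.comp_hasDerivAt t hX

theorem inner_neg_of_adjoint_comp_self_add_eq_zero {E F : Type*}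
    [NormedAddCommGroup E] [InnerProductSpace ℝ E] [FiniteDimensional ℝ E]
    [NormedAddCommGroup F] [InnerProductSpace ℝ F] [FiniteDimensional ℝ F]
    {L : E →ₗ[ℝ] F} {v G : E} (h : (L.adjoint ∘ₗ L) v + G = 0) (hG : G ≠ 0) :
    inner ℝ G v < 0 := by
  have hG_eq : G = -L.adjoint (L v) := eq_neg_of_add_eq_zero_right h
  have hLv : L v ≠ 0 := fun h0 => hG (by rw [hG_eq, h0, map_zero, neg_zero])
  rw [hG_eq, inner_neg_left, LinearMap.adjoint_inner_left, real_inner_self_eq_norm_sq, neg_lt_zero]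
  positivity

theorem admm_flow_strict_decrease_general
    {m n : ℕ}
    (f : EuclideanSpace ℝ (Fin n) → ℝ) (g : EuclideanSpace ℝ (Fin m) → ℝ)
    (hf : ContDiff ℝ 1 f) (hg : ContDiff ℝ 1 g)
    (A : Matrix (Fin m) (Fin n) ℝ)
    (V : EuclideanSpace ℝ (Fin n) → ℝ)
    (hV : ∀ x, V x = f x + g (Matrix.toEuclideanLin A x))
    (I : Set ℝ)
    (X X' : ℝ → EuclideanSpace ℝ (Fin n))
    (hX : ∀ t ∈ I, HasDerivAt X (X' t) t)
    (hflow : ∀ t ∈ I,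
      Matrix.toEuclideanLin (Aᵀ * A) (X' t) + gradient V (X t) = 0)
    (t : ℝ) (ht : t ∈ I) (hgrad : gradient V (X t) ≠ 0) :
    deriv (fun s => V (X s)) t < 0 := by
  set L := (toEuclideanLin A).toContinuousLinearMap
  have hV_diff : Differentiable ℝ V := by
    rw [show V = fun x => f x + g (L x) from funext hV]
    exact (hf.differentiable one_ne_zero).add
      ((hg.differentiable one_ne_zero).comp L.differentiable)
  rw [((hV_diff _).hasGradientAt.hasDerivAt_comp (hX t ht)).deriv]
  refine inner_neg_of_adjoint_comp_self_add_eq_zero (L := toEuclideanLin A) ?_ hgrad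
  rw [← toEuclideanLin_conjTranspose_mul_self, conjTranspose_eq_transpose_of_trivial]
  exact hflow t ht

/-- **Strict decrease of `V` along the ADMM flow away from stationary points.**
If `X` is a continuously differentiable solution of the ADMM flow
`AᵀA Ẋ(t) + ∇V(X(t)) = 0` on an interval `I` and `∇V(X(t)) ≠ 0` at some `t ∈ I`,
then the derivative of `s ↦ V(X(s))` at `s = t` is strictly negative. -/
theorem admm_flow_strict_decrease
    {m n : ℕ} (hmn : n ≤ m)
    (f : EuclideanSpace ℝ (Fin n) → ℝ) (g : EuclideanSpace ℝ (Fin m) → ℝ)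
    (hf : ContDiff ℝ 1 f) (hg : ContDiff ℝ 1 g)
    (hfconv : ConvexOn ℝ Set.univ f) (hgconv : ConvexOn ℝ Set.univ g)
    (A : Matrix (Fin m) (Fin n) ℝ) (hA : A.rank = n)
    (V : EuclideanSpace ℝ (Fin n) → ℝ)
    (hV : ∀ x, V x = f x + g (Matrix.toEuclideanLin A x))
    (I : Set ℝ) (hI : I.OrdConnected)
    (X X' : ℝ → EuclideanSpace ℝ (Fin n))
    (hX : ∀ t ∈ I, HasDerivAt X (X' t) t)
    (hX' : ContinuousOn X' I)
    (hflow : ∀ t ∈ I,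
      Matrix.toEuclideanLin (Aᵀ * A) (X' t) + gradient V (X t) = 0)
    (t : ℝ) (ht : t ∈ I) (hgrad : gradient V (X t) ≠ 0) :
    deriv (fun s => V (X s)) t < 0 :=
  admm_flow_strict_decrease_general f g hf hg A V hV I X X' hX hflow t ht hgrad
end

section
/- Let X⋆ be a strict local minimizer and isolated stationary point of V, i.e., there is an open set O ⊆ ℝⁿ containing X⋆ such that ∇V(X) ≠ 0 and V(X) > V(X⋆) for all X ∈ O \ {X⋆}. Then X⋆ is an asymptotically stable critical point of the ADMM flow: for every ε > 0 with the closed ball of radius ε around X⋆ contained in O, there exists δ > 0 such that every continuously differentiable solution X : [t₀, ∞) → ℝⁿ of AᵀA Ẋ(t) + ∇V(X(t)) = 0 with ‖X(t₀) − X⋆‖ < δ satisfies ‖X(t) − X⋆‖ < ε for all t ≥ t₀ and moreover X(t) → X⋆ as t → ∞. -/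
/-!
Since `∇V(X) = -AᵀA Ẋ`, along a solution `d/dt V(X) = -‖A Ẋ‖² ≤ -‖∇V(X)‖² / C` with
`C = ‖A‖² + 1`, so `V` is a strict Lyapunov function of the flow.
Stability: `V` stays above some `μ > V(X⋆)` on the sphere of radius `ε`, and a trajectory
starting where `V < μ` can never reach that sphere.
Convergence: on the compact annulus `r ≤ ‖X - X⋆‖ ≤ ε` the gradient is bounded away from zero,
so a trajectory staying there forever would drive `V` linearly to `-∞`; hence `V(X(t))` eventually
drops below the minimum of `V` on the annulus, and then the trajectory is in the `r`-ball for good.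
-/

open Matrix Set Filter
open scoped Topology InnerProductSpace Gradient

lemma antitoneOn_Ici_of_hasDerivAt_nonpos {f : ℝ → ℝ} {s : ℝ}
    (hf : ∀ u ∈ Ici s, ∃ w, HasDerivAt f w u ∧ w ≤ 0) : AntitoneOn f (Ici s) := by
  refine antitoneOn_of_deriv_nonpos (convex_Ici s) (fun u hu => ?_) (fun u hu => ?_) fun u hu => ?_
  · obtain ⟨w, hw, -⟩ := hf u hu
    exact hw.continuousAt.continuousWithinAt
  all_goals rw [interior_Ici] at hu; obtain ⟨w, hw, hw0⟩ := hf u (mem_Ici.2 hu.le)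
  · exact hw.differentiableAt.differentiableWithinAt
  · rwa [hw.deriv]

section Lyapunov

variable {E : Type*}

def DecreasesAtRate (V D : E → ℝ) (X : ℝ → E) (t₀ : ℝ) : Prop :=
  ∀ t ∈ Ici t₀, ∃ w, HasDerivAt (fun s => V (X s)) w t ∧ w ≤ -D (X t)

variable {V D : E → ℝ} {X : ℝ → E} {t₀ : ℝ}

lemma DecreasesAtRate.add_mul_le (h : DecreasesAtRate V D X t₀) {s a t : ℝ} (hs : t₀ ≤ s)
    (ha : ∀ u ∈ Ici s, a ≤ D (X u)) (hst : s ≤ t) : V (X t) + a * (t - s) ≤ V (X s) := by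
  have hanti : AntitoneOn (fun u => V (X u) + a * u) (Ici s) := by
    refine antitoneOn_Ici_of_hasDerivAt_nonpos fun u hu => ?_
    obtain ⟨w, hw, hwD⟩ := h u (hs.trans hu)
    exact ⟨w + a * 1, hw.add ((hasDerivAt_id u).const_mul a), by linarith [ha u hu]⟩
  linarith [hanti self_mem_Ici hst hst]

lemma DecreasesAtRate.antitoneOn (h : DecreasesAtRate V D X t₀) (hD : ∀ y, 0 ≤ D y) :
    AntitoneOn (fun t => V (X t)) (Ici t₀) := fun s hs t _ hst => by
  linarith [h.add_mul_le hs (fun u _ => hD (X u)) hst]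

/-- Otherwise `D` is bounded below by a positive constant along the path, and `V` decreases
linearly forever. -/
lemma DecreasesAtRate.exists_lt [TopologicalSpace E] (h : DecreasesAtRate V D X t₀)
    (hV : Continuous V) (hD : Continuous D) {K : Set E} (hK : IsCompact K)
    (hX : ∀ t ∈ Ici t₀, X t ∈ K) {c μ : ℝ} (hc : ∀ y ∈ K, c ≤ V y)
    (hμ : ∀ y ∈ K, μ ≤ V y → 0 < D y) : ∃ T ∈ Ici t₀, V (X T) < μ := by
  by_contra! hlevel
  obtain ⟨a, ha, haD⟩ := (hK.inter_right (isClosed_le continuous_const hV)).exists_forall_le'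
    hD.continuousOn fun y hy => hμ y hy.1 hy.2
  have hc₀ := hc _ (hX t₀ self_mem_Ici)
  set τ := (V (X t₀) - c) / a + 1
  have hτ : 0 ≤ τ := by have := div_nonneg (sub_nonneg.2 hc₀) ha.le; linarith
  have haτ : a * τ = V (X t₀) - c + a := by simp only [τ]; field_simp
  have hT : t₀ ≤ t₀ + τ := by linarith
  have hlin := h.add_mul_le le_rfl (fun u hu => haD (X u) ⟨hX u hu, hlevel u hu⟩) hT
  rw [add_sub_cancel_left] at hlin
  linarith [hc _ (hX _ hT)]

lemma exists_forall_dist_lt_of_antitoneOn [MetricSpace E] [ProperSpace E] (hV : Continuous V)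
    {x₀ : E} {ε : ℝ} (hε : 0 < ε) (hmin : ∀ y ∈ Metric.sphere x₀ ε, V x₀ < V y) :
    ∃ δ > 0, ∀ (t₀ : ℝ) (X : ℝ → E), ContinuousOn X (Ici t₀) →
      AntitoneOn (fun t => V (X t)) (Ici t₀) → dist (X t₀) x₀ < δ →
      ∀ t ∈ Ici t₀, dist (X t) x₀ < ε := by
  obtain ⟨μ, hμ, hμV⟩ := (isCompact_sphere x₀ ε).exists_forall_le' hV.continuousOn hmin
  obtain ⟨δ, hδ, hδV⟩ := Metric.mem_nhds_iff.1 ((isOpen_lt hV continuous_const).mem_nhds hμ)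
  refine ⟨min δ ε, lt_min hδ hε, fun t₀ X hX hanti h₀ t ht => ?_⟩
  by_contra! hexit
  obtain ⟨s, hs, hsε⟩ := intermediate_value_Icc (mem_Ici.1 ht)
    ((continuous_id.dist continuous_const).comp_continuousOn (hX.mono Icc_subset_Ici_self))
    ⟨(h₀.trans_le (min_le_right _ _)).le, hexit⟩
  have hV₀ : V (X t₀) < μ := hδV (h₀.trans_le (min_le_left _ _))
  have hVs : μ ≤ V (X s) := hμV _ (Metric.mem_sphere.2 hsε)
  have hVs₀ : V (X s) ≤ V (X t₀) := hanti self_mem_Ici hs.1 hs.1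
  linarith

lemma DecreasesAtRate.tendsto [MetricSpace E] (h : DecreasesAtRate V D X t₀)
    (hV : Continuous V) (hD : Continuous D) (hD₀ : ∀ y, 0 ≤ D y) {K : Set E} (hK : IsCompact K)
    (hX : ∀ t ∈ Ici t₀, X t ∈ K) {x₀ : E} (hstrict : ∀ y ∈ K, y ≠ x₀ → 0 < D y ∧ V x₀ < V y) :
    Tendsto X atTop (𝓝 x₀) := by
  have hmin : ∀ y ∈ K, V x₀ ≤ V y := fun y hy => by
    rcases eq_or_ne y x₀ with rfl | hne
    exacts [le_rfl, (hstrict y hy hne).2.le]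
  refine Metric.tendsto_atTop.2 fun r hr => ?_
  obtain ⟨μ, hμ, hμV⟩ := (hK.diff Metric.isOpen_ball).exists_forall_le' hV.continuousOn
    fun y hy => (hstrict y hy.1 fun hy₀ => hy.2 (by rw [hy₀]; exact Metric.mem_ball_self hr)).2
  obtain ⟨T, hT, hVT⟩ := h.exists_lt hV hD hK hX hmin fun y hy hμy =>
    (hstrict y hy fun hy₀ => by rw [hy₀] at hμy; linarith).1
  refine ⟨T, fun t ht => ?_⟩
  by_contra! hfar
  have htT := h.antitoneOn hD₀ hT (mem_Ici.2 (le_trans hT ht)) ht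
  linarith [hμV (X t) ⟨hX t (le_trans hT ht), fun hin => (Metric.mem_ball.1 hin).not_ge hfar⟩]

theorem exists_forall_dist_lt_and_tendsto_of_decreasesAtRate [MetricSpace E] [ProperSpace E]
    (hV : Continuous V) (hD : Continuous D) (hD₀ : ∀ y, 0 ≤ D y) {x₀ : E} {ε : ℝ} (hε : 0 < ε)
    (hstrict : ∀ y ∈ Metric.closedBall x₀ ε, y ≠ x₀ → 0 < D y ∧ V x₀ < V y) :
    ∃ δ > 0, ∀ (t₀ : ℝ) (X : ℝ → E), ContinuousOn X (Ici t₀) → DecreasesAtRate V D X t₀ →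
      dist (X t₀) x₀ < δ → (∀ t ∈ Ici t₀, dist (X t) x₀ < ε) ∧ Tendsto X atTop (𝓝 x₀) := by
  obtain ⟨δ, hδ, hstable⟩ := exists_forall_dist_lt_of_antitoneOn hV hε fun y hy =>
    (hstrict y (Metric.sphere_subset_closedBall hy) (Metric.ne_of_mem_sphere hy hε.ne')).2
  refine ⟨δ, hδ, fun t₀ X hX hdec h₀ => ?_⟩
  have hball := hstable t₀ X hX (hdec.antitoneOn hD₀) h₀
  exact ⟨hball, hdec.tendsto hV hD hD₀ (isCompact_closedBall x₀ ε)
    (fun t ht => Metric.mem_closedBall.2 (hball t ht).le) hstrict⟩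

end Lyapunov

section GradientFlow

variable {E F : Type*} [NormedAddCommGroup E] [InnerProductSpace ℝ E] [CompleteSpace E]
  [NormedAddCommGroup F] [InnerProductSpace ℝ F] [CompleteSpace F]

lemma ContDiff.continuous_gradient {V : E → ℝ} (hV : ContDiff ℝ 1 V) : Continuous (∇ V) :=
  (InnerProductSpace.toDual ℝ E).symm.continuous.comp (hV.continuous_fderiv one_ne_zero)

lemma ContinuousLinearMap.norm_adjoint_apply_apply_sq_le (B : E →L[ℝ] F) (v : E) :
    ‖B.adjoint (B v)‖ ^ 2 ≤ ‖B‖ ^ 2 * ⟪B.adjoint (B v), v⟫_ℝ :=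
  calc ‖B.adjoint (B v)‖ ^ 2 ≤ (‖B‖ * ‖B v‖) ^ 2 := by
        gcongr
        simpa using B.adjoint.le_opNorm (B v)
    _ = ‖B‖ ^ 2 * ⟪B.adjoint (B v), v⟫_ℝ := by
        rw [ContinuousLinearMap.adjoint_inner_left, real_inner_self_eq_norm_sq]; ring

/-- Along a solution of `P Ẋ + ∇V(X) = 0` with `‖P v‖² ≤ C ⟪P v, v⟫`, the derivative of `V(X)` is
`⟪∇V(X), Ẋ⟫ = -⟪P Ẋ, Ẋ⟫ ≤ -‖P Ẋ‖² / C = -‖∇V(X)‖² / C`. -/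
lemma decreasesAtRate_of_hasDerivAt_add_gradient_eq_zero {V : E → ℝ} (hV : Differentiable ℝ V)
    {P : E → E} {C : ℝ} (hC : 0 < C) (hP : ∀ v, ‖P v‖ ^ 2 ≤ C * ⟪P v, v⟫_ℝ) {X X' : ℝ → E}
    {t₀ : ℝ} (hX : ∀ t ∈ Ici t₀, HasDerivAt X (X' t) t)
    (hflow : ∀ t ∈ Ici t₀, P (X' t) + ∇ V (X t) = 0) :
    DecreasesAtRate V (fun y => ‖∇ V y‖ ^ 2 / C) X t₀ := by
  intro t ht
  have hgrad : ∇ V (X t) = -P (X' t) := eq_neg_of_add_eq_zero_right (hflow t ht)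
  refine ⟨⟪∇ V (X t), X' t⟫_ℝ, ?_, ?_⟩
  · have hchain := (hV (X t)).hasFDerivAt.comp_hasDerivAt t (hX t ht)
    rwa [(hV (X t)).hasGradientAt.fderiv_apply] at hchain
  · show _ ≤ -(‖∇ V (X t)‖ ^ 2 / C)
    rw [hgrad, norm_neg, inner_neg_left, neg_le_neg_iff, div_le_iff₀' hC]
    exact hP (X' t)

end GradientFlow

lemma Matrix.toEuclideanLin_transpose_mul_self_apply {m n : Type*} [Fintype m] [Fintype n]
    [DecidableEq m] [DecidableEq n] (A : Matrix m n ℝ) (v : EuclideanSpace ℝ n) :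
    toEuclideanLin (Aᵀ * A) v =
      (LinearMap.toContinuousLinearMap (toEuclideanLin A)).adjoint (toEuclideanLin A v) := by
  rw [← LinearMap.adjoint_toContinuousLinearMap, ← toEuclideanLin_conjTranspose_eq_adjoint,
    conjTranspose_eq_transpose_of_trivial]
  simp [toLpLin_apply, mulVec_mulVec]

lemma Matrix.exists_norm_toEuclideanLin_transpose_mul_self_apply_sq_le {m n : Type*} [Fintype m]
    [Fintype n] [DecidableEq m] [DecidableEq n] (A : Matrix m n ℝ) :
    ∃ C > 0, ∀ v, ‖toEuclideanLin (Aᵀ * A) v‖ ^ 2 ≤ C * ⟪toEuclideanLin (Aᵀ * A) v, v⟫_ℝ := by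
  set B := LinearMap.toContinuousLinearMap (toEuclideanLin A)
  refine ⟨‖B‖ ^ 2 + 1, by positivity, fun v => ?_⟩
  have hnonneg : 0 ≤ ⟪B.adjoint (B v), v⟫_ℝ := by
    rw [ContinuousLinearMap.adjoint_inner_left]; exact real_inner_self_nonneg
  rw [toEuclideanLin_transpose_mul_self_apply]
  calc _ ≤ ‖B‖ ^ 2 * ⟪B.adjoint (B v), v⟫_ℝ := B.norm_adjoint_apply_apply_sq_le v
    _ ≤ _ := mul_le_mul_of_nonneg_right (by linarith) hnonneg

theorem admm_flow_asymptotic_stability_general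
    {m n : ℕ}
    (f : EuclideanSpace ℝ (Fin n) → ℝ) (g : EuclideanSpace ℝ (Fin m) → ℝ)
    (hf : ContDiff ℝ 1 f) (hg : ContDiff ℝ 1 g)
    (A : Matrix (Fin m) (Fin n) ℝ)
    (V : EuclideanSpace ℝ (Fin n) → ℝ)
    (hV : ∀ x, V x = f x + g (Matrix.toEuclideanLin A x))
    (Xstar : EuclideanSpace ℝ (Fin n)) (O : Set (EuclideanSpace ℝ (Fin n)))
    (hstrict : ∀ x ∈ O \ {Xstar}, gradient V x ≠ 0 ∧ V Xstar < V x) :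
    ∀ ε > (0 : ℝ), Metric.closedBall Xstar ε ⊆ O →
      ∃ δ > (0 : ℝ), ∀ (t₀ : ℝ) (X X' : ℝ → EuclideanSpace ℝ (Fin n)),
        (∀ t ∈ Set.Ici t₀, HasDerivAt X (X' t) t) →
        ContinuousOn X' (Set.Ici t₀) →
        (∀ t ∈ Set.Ici t₀,
          Matrix.toEuclideanLin (Aᵀ * A) (X' t) + gradient V (X t) = 0) →
        ‖X t₀ - Xstar‖ < δ →
        (∀ t ∈ Set.Ici t₀, ‖X t - Xstar‖ < ε) ∧
          Tendsto X atTop (nhds Xstar) := by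
  intro ε hε hball
  have hVC : ContDiff ℝ 1 V := by
    rw [funext hV]
    exact hf.add (hg.comp (toEuclideanLin A).toContinuousLinearMap.contDiff)
  obtain ⟨C, hC, hP⟩ := A.exists_norm_toEuclideanLin_transpose_mul_self_apply_sq_le
  have hD : Continuous fun y => ‖∇ V y‖ ^ 2 / C := by
    have := hVC.continuous_gradient
    fun_prop
  obtain ⟨δ, hδ, hstable⟩ := exists_forall_dist_lt_and_tendsto_of_decreasesAtRate hVC.continuous
    hD (fun y => by positivity) hε fun y hy hne => by
      obtain ⟨hgrad, hlt⟩ := hstrict y ⟨hball hy, hne⟩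
      exact ⟨div_pos (pow_pos (norm_pos_iff.2 hgrad) 2) hC, hlt⟩
  refine ⟨δ, hδ, fun t₀ X X' hX _ hflow h₀ => ?_⟩
  simpa only [dist_eq_norm] using hstable t₀ X
    (fun t ht => (hX t ht).continuousAt.continuousWithinAt)
    (decreasesAtRate_of_hasDerivAt_add_gradient_eq_zero (hVC.differentiable one_ne_zero) hC hP
      hX hflow) (by rwa [dist_eq_norm])

/-- **Asymptotic stability of strict isolated minimizers for the ADMM flow.**
Let `X⋆` be a strict local minimizer and isolated stationary point of `V`, i.e. there is
an open set `O` containing `X⋆` with `∇V(X) ≠ 0` and `V(X) > V(X⋆)` for all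
`X ∈ O \ {X⋆}`. Then `X⋆` is an asymptotically stable critical point of the ADMM flow:
for every `ε > 0` such that the closed `ε`-ball around `X⋆` is contained in `O`,
there is `δ > 0` such that every continuously differentiable solution `X : [t₀, ∞) → ℝⁿ`
of `AᵀA Ẋ(t) + ∇V(X(t)) = 0` with `‖X(t₀) − X⋆‖ < δ` remains in the open `ε`-ball around
`X⋆` for all `t ≥ t₀`, and `X(t) → X⋆` as `t → ∞`. -/
theorem admm_flow_asymptotic_stability
    {m n : ℕ} (hmn : n ≤ m)
    (f : EuclideanSpace ℝ (Fin n) → ℝ) (g : EuclideanSpace ℝ (Fin m) → ℝ)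
    (hf : ContDiff ℝ 1 f) (hg : ContDiff ℝ 1 g)
    (hfconv : ConvexOn ℝ Set.univ f) (hgconv : ConvexOn ℝ Set.univ g)
    (A : Matrix (Fin m) (Fin n) ℝ) (hA : A.rank = n)
    (V : EuclideanSpace ℝ (Fin n) → ℝ)
    (hV : ∀ x, V x = f x + g (Matrix.toEuclideanLin A x))
    (Xstar : EuclideanSpace ℝ (Fin n)) (O : Set (EuclideanSpace ℝ (Fin n)))
    (hO : IsOpen O) (hXO : Xstar ∈ O)
    (hstrict : ∀ x ∈ O \ {Xstar}, gradient V x ≠ 0 ∧ V Xstar < V x) :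
    ∀ ε > (0 : ℝ), Metric.closedBall Xstar ε ⊆ O →
      ∃ δ > (0 : ℝ), ∀ (t₀ : ℝ) (X X' : ℝ → EuclideanSpace ℝ (Fin n)),
        (∀ t ∈ Set.Ici t₀, HasDerivAt X (X' t) t) →
        ContinuousOn X' (Set.Ici t₀) →
        (∀ t ∈ Set.Ici t₀,
          Matrix.toEuclideanLin (Aᵀ * A) (X' t) + gradient V (X t) = 0) →
        ‖X t₀ - Xstar‖ < δ →
        (∀ t ∈ Set.Ici t₀, ‖X t - Xstar‖ < ε) ∧
          Tendsto X atTop (nhds Xstar) :=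
  admm_flow_asymptotic_stability_general f g hf hg A V hV Xstar O hstrict
end

section
/- Let r > 1 and let X : [t₀, ∞) → ℝⁿ (with t₀ > 0) be a twice continuously differentiable solution of the A-ADMM flow AᵀA (Ẍ(t) + (r/t) Ẋ(t)) + ∇V(X(t)) = 0, let X⋆ be a minimizer of V, and define ℰ(t) = (t/(r−1))²·(V(X(t)) − V(X⋆)) + ½‖A(X(t) − X⋆ + (t/(r−1)) Ẋ(t))‖². Then for all t ≥ t₀, ℰ̇(t) ≤ −(t(r−3)/(r−1)²)·(V(X(t)) − V(X⋆)); in particular, if r ≥ 3 then ℰ is nonincreasing on [t₀, ∞). -/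
open Matrix Set

/-!
Along the flow, the shifted point `X - X⋆ + (t/(r-1)) Ẋ` has velocity
`(t/(r-1)) (Ẍ + (r/t) Ẋ)`, which `AᵀA` sends to `-(t/(r-1)) ∇V(X)`. So the quadratic part of `ℰ`
contributes `-(t/(r-1)) ⟪∇V(X), X - X⋆ + (t/(r-1)) Ẋ⟫`, whose `Ẋ`-term cancels the chain-rule
term of the potential part, leaving
`ℰ̇ = 2t/(r-1)² (V(X) - V(X⋆)) - t/(r-1) ⟪∇V(X), X - X⋆⟫`.
Convexity of `V` bounds the inner product below by `V(X) - V(X⋆)`, which gives the rate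
`-(t(r-3)/(r-1)²) (V(X) - V(X⋆))`, nonpositive once `r ≥ 3`.
-/

theorem ConvexOn.add_le_of_hasFDerivAt {E : Type*} [NormedAddCommGroup E] [NormedSpace ℝ E]
    {f : E → ℝ} {f' : E →L[ℝ] ℝ} {x : E} (hconv : ConvexOn ℝ univ f)
    (hf : HasFDerivAt f f' x) (y : E) : f x + f' (y - x) ≤ f y := by
  let ℓ : ℝ →ᵃ[ℝ] E := AffineMap.lineMap x y
  have hline : ConvexOn ℝ univ (f ∘ ℓ) := by simpa using hconv.comp_affineMap ℓ
  have hderiv : HasDerivAt (f ∘ ℓ) (f' (y - x)) 0 :=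
    hf.comp_hasDerivAt_of_eq 0 AffineMap.hasDerivAt_lineMap (by simp [ℓ])
  have := hline.le_slope_of_hasDerivAt (mem_univ 0) (mem_univ 1) one_pos hderiv
  simp only [slope_def_field, Function.comp_apply, ℓ, AffineMap.lineMap_apply_zero,
    AffineMap.lineMap_apply_one, sub_zero, div_one] at this
  linarith

theorem ConvexOn.sub_le_inner_of_hasGradientAt {E : Type*} [NormedAddCommGroup E]
    [InnerProductSpace ℝ E] [CompleteSpace E] {f : E → ℝ} {G x : E}
    (hconv : ConvexOn ℝ univ f) (hf : HasGradientAt f G x) (y : E) :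
    f x - f y ≤ inner ℝ G (x - y) := by
  have := hconv.add_le_of_hasFDerivAt hf.hasFDerivAt y
  rw [InnerProductSpace.toDual_apply_apply, ← neg_sub, inner_neg_right] at this
  linarith

theorem Convex.antitoneOn_of_hasDerivAt_nonpos {D : Set ℝ} (hD : Convex ℝ D) {f f' : ℝ → ℝ}
    (hf : ∀ x ∈ D, HasDerivAt f (f' x) x) (hf' : ∀ x ∈ interior D, f' x ≤ 0) :
    AntitoneOn f D :=
  antitoneOn_of_hasDerivWithinAt_nonpos hD (fun x hx => (hf x hx).continuousAt.continuousWithinAt)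
    (fun x hx => (hf x (interior_subset hx)).hasDerivWithinAt) hf'

theorem Matrix.inner_toEuclideanLin_toEuclideanLin {m n : Type*} [Fintype m] [Fintype n]
    [DecidableEq m] [DecidableEq n] (A : Matrix m n ℝ) (u v : EuclideanSpace ℝ n) :
    inner ℝ (toEuclideanLin A u) (toEuclideanLin A v) = inner ℝ u (toEuclideanLin (Aᵀ * A) v) := by
  have hcomp : toEuclideanLin (Aᵀ * A) v = toEuclideanLin Aᴴ (toEuclideanLin A v) := by
    simp [toLpLin_apply, mulVec_mulVec]
  rw [hcomp, toEuclideanLin_conjTranspose_eq_adjoint, LinearMap.adjoint_inner_right]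

namespace AADMMFlow

section Point

variable {E : Type*} [NormedAddCommGroup E] [NormedSpace ℝ E]

noncomputable def shiftedPoint (r : ℝ) (xstar : E) (X X' : ℝ → E) (t : ℝ) : E :=
  X t - xstar + (t / (r - 1)) • X' t

theorem hasDerivAt_shiftedPoint {r t : ℝ} (hr : r ≠ 1) (ht : t ≠ 0) {xstar : E}
    {X X' X'' : ℝ → E} (hX : HasDerivAt X (X' t) t) (hX' : HasDerivAt X' (X'' t) t) :
    HasDerivAt (shiftedPoint r xstar X X') ((t / (r - 1)) • (X'' t + (r / t) • X' t)) t := by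
  have h : HasDerivAt (shiftedPoint r xstar X X')
      (X' t + ((t / (r - 1)) • X'' t + (1 / (r - 1)) • X' t)) t :=
    (hX.sub_const xstar).add (((hasDerivAt_id' t).div_const (r - 1)).smul hX')
  have hcoef : t / (r - 1) * (r / t) = 1 + 1 / (r - 1) := by
    field_simp [sub_ne_zero.2 hr]
    ring
  convert h using 1
  rw [smul_add, smul_smul, hcoef, add_smul, one_smul]
  abel

end Point

variable {m n : ℕ}

noncomputable def lyapunov (A : Matrix (Fin m) (Fin n) ℝ) (V : EuclideanSpace ℝ (Fin n) → ℝ)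
    (r : ℝ) (xstar : EuclideanSpace ℝ (Fin n)) (X X' : ℝ → EuclideanSpace ℝ (Fin n)) (t : ℝ) :
    ℝ :=
  (t / (r - 1)) ^ 2 * (V (X t) - V xstar)
    + (1 / 2) * ‖toEuclideanLin A (shiftedPoint r xstar X X' t)‖ ^ 2

theorem hasDerivAt_lyapunov {A : Matrix (Fin m) (Fin n) ℝ} {V : EuclideanSpace ℝ (Fin n) → ℝ}
    {r t : ℝ} (hr : r ≠ 1) (ht : t ≠ 0) {xstar G : EuclideanSpace ℝ (Fin n)}
    {X X' X'' : ℝ → EuclideanSpace ℝ (Fin n)}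
    (hX : HasDerivAt X (X' t) t) (hX' : HasDerivAt X' (X'' t) t) (hV : HasGradientAt V G (X t))
    (hflow : toEuclideanLin (Aᵀ * A) (X'' t + (r / t) • X' t) + G = 0) :
    HasDerivAt (lyapunov A V r xstar X X')
      (2 * t / (r - 1) ^ 2 * (V (X t) - V xstar) - t / (r - 1) * inner ℝ G (X t - xstar)) t := by
  have hp := hasDerivAt_shiftedPoint (xstar := xstar) hr ht hX hX'
  have hAp := ((toEuclideanLin A).toContinuousLinearMap.hasFDerivAt.comp_hasDerivAt t hp).norm_sq
  have hcoef := ((hasDerivAt_id' t).div_const (r - 1)).pow 2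
  have hVX := hV.hasFDerivAt.comp_hasDerivAt t hX
  rw [InnerProductSpace.toDual_apply_apply] at hVX
  have hinner : inner ℝ (toEuclideanLin A (shiftedPoint r xstar X X' t))
      (toEuclideanLin A ((t / (r - 1)) • (X'' t + (r / t) • X' t)))
      = -(t / (r - 1) * inner ℝ (shiftedPoint r xstar X X' t) G) := by
    rw [inner_toEuclideanLin_toEuclideanLin, map_smul, eq_neg_of_add_eq_zero_left hflow,
      inner_smul_right, inner_neg_right, mul_neg]
  refine ((hcoef.mul (hVX.sub_const (V xstar))).add (hAp.const_mul (1 / 2))).congr_deriv ?_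
  simp only [Function.comp_apply, LinearMap.coe_toContinuousLinearMap', hinner]
  simp only [Pi.pow_apply, shiftedPoint, real_inner_comm G, inner_add_right, real_inner_smul_right]
  push_cast
  field_simp [sub_ne_zero.2 hr]
  ring

theorem lyapunov_deriv_le_of_convexOn {E : Type*} [NormedAddCommGroup E] [InnerProductSpace ℝ E]
    [CompleteSpace E] {V : E → ℝ} {G x xstar : E} {r t : ℝ} (hconv : ConvexOn ℝ univ V)
    (hV : HasGradientAt V G x) (hr : 1 < r) (ht : 0 ≤ t) :
    2 * t / (r - 1) ^ 2 * (V x - V xstar) - t / (r - 1) * inner ℝ G (x - xstar)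
      ≤ -(t * (r - 3) / (r - 1) ^ 2) * (V x - V xstar) :=
  calc _ ≤ 2 * t / (r - 1) ^ 2 * (V x - V xstar) - t / (r - 1) * (V x - V xstar) :=
        sub_le_sub_left (mul_le_mul_of_nonneg_left (hconv.sub_le_inner_of_hasGradientAt hV xstar)
          (div_nonneg ht (sub_nonneg.2 hr.le))) _
    _ = -(t * (r - 3) / (r - 1) ^ 2) * (V x - V xstar) := by
        field_simp [(sub_pos.2 hr).ne']
        ring

end AADMMFlow

open AADMMFlow in
theorem aadmm_flow_lyapunov_derivative_bound_general
    {m n : ℕ}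
    (f : EuclideanSpace ℝ (Fin n) → ℝ) (g : EuclideanSpace ℝ (Fin m) → ℝ)
    (hf : ContDiff ℝ 1 f) (hg : ContDiff ℝ 1 g)
    (hfconv : ConvexOn ℝ Set.univ f) (hgconv : ConvexOn ℝ Set.univ g)
    (A : Matrix (Fin m) (Fin n) ℝ)
    (V : EuclideanSpace ℝ (Fin n) → ℝ)
    (hV : ∀ x, V x = f x + g (Matrix.toEuclideanLin A x))
    (r : ℝ) (hr : 1 < r)
    (t₀ : ℝ) (ht₀ : 0 < t₀)
    (X X' X'' : ℝ → EuclideanSpace ℝ (Fin n))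
    (hX : ∀ t ∈ Set.Ici t₀, HasDerivAt X (X' t) t)
    (hX' : ∀ t ∈ Set.Ici t₀, HasDerivAt X' (X'' t) t)
    (hflow : ∀ t ∈ Set.Ici t₀,
      Matrix.toEuclideanLin (Aᵀ * A) (X'' t + (r / t) • X' t) + gradient V (X t) = 0)
    (Xstar : EuclideanSpace ℝ (Fin n)) (hXstar : ∀ x, V Xstar ≤ V x)
    (E : ℝ → ℝ)
    (hE : ∀ t, E t = (t / (r - 1)) ^ 2 * (V (X t) - V Xstar)
      + (1 / 2) *
        ‖Matrix.toEuclideanLin A (X t - Xstar + (t / (r - 1)) • X' t)‖ ^ 2) :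
    (∀ t ∈ Set.Ici t₀, ∃ d : ℝ, HasDerivAt E d t ∧
        d ≤ -(t * (r - 3) / (r - 1) ^ 2) * (V (X t) - V Xstar)) ∧
      (3 ≤ r → AntitoneOn E (Set.Ici t₀)) := by
  have hVeq : V = fun x => f x + g (toEuclideanLin A x) := funext hV
  have hVconv : ConvexOn ℝ univ V := by
    rw [hVeq]
    exact hfconv.add (hgconv.comp_linearMap _)
  have hVdiff : Differentiable ℝ V := by
    rw [hVeq]
    exact (hf.add (hg.comp (toEuclideanLin A).toContinuousLinearMap.contDiff)).differentiable
      one_ne_zero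
  let D t := 2 * t / (r - 1) ^ 2 * (V (X t) - V Xstar)
    - t / (r - 1) * inner ℝ (gradient V (X t)) (X t - Xstar)
  obtain rfl : E = lyapunov A V r Xstar X X' := funext hE
  have hderiv : ∀ t ∈ Ici t₀, HasDerivAt (lyapunov A V r Xstar X X') (D t) t := fun t ht =>
    hasDerivAt_lyapunov hr.ne' (ht₀.trans_le ht).ne' (hX t ht) (hX' t ht)
      (hVdiff _).hasGradientAt (hflow t ht)
  have hbound : ∀ t ∈ Ici t₀, D t ≤ -(t * (r - 3) / (r - 1) ^ 2) * (V (X t) - V Xstar) :=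
    fun t ht => lyapunov_deriv_le_of_convexOn hVconv (hVdiff _).hasGradientAt hr (ht₀.le.trans ht)
  refine ⟨fun t ht => ⟨D t, hderiv t ht, hbound t ht⟩, fun hr3 => ?_⟩
  refine (convex_Ici t₀).antitoneOn_of_hasDerivAt_nonpos hderiv fun t ht => ?_
  rw [interior_Ici] at ht
  refine (hbound t (mem_Ici.2 ht.le)).trans ?_
  have hrate : 0 ≤ t * (r - 3) / (r - 1) ^ 2 :=
    div_nonneg (mul_nonneg (ht₀.trans ht).le (sub_nonneg.2 hr3)) (sq_nonneg _)
  exact mul_nonpos_of_nonpos_of_nonneg (neg_nonpos.2 hrate) (sub_nonneg.2 (hXstar _))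

/-- **Derivative bound on the Lyapunov function of the A-ADMM flow.**
Let `r > 1` and let `X` be a twice continuously differentiable solution of the A-ADMM
flow `AᵀA(Ẍ(t) + (r/t)Ẋ(t)) + ∇V(X(t)) = 0` on `[t₀, ∞)` (with `t₀ > 0`), let `X⋆` be a
minimizer of `V`, and let
`ℰ(t) = (t/(r−1))²(V(X(t)) − V(X⋆)) + ½‖A(X(t) − X⋆ + (t/(r−1))Ẋ(t))‖²`.
Then for all `t ≥ t₀`, `ℰ̇(t) ≤ −(t(r−3)/(r−1)²)(V(X(t)) − V(X⋆))`; in particular,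
if `r ≥ 3` then `ℰ` is nonincreasing on `[t₀, ∞)`. -/
theorem aadmm_flow_lyapunov_derivative_bound
    {m n : ℕ} (hmn : n ≤ m)
    (f : EuclideanSpace ℝ (Fin n) → ℝ) (g : EuclideanSpace ℝ (Fin m) → ℝ)
    (hf : ContDiff ℝ 1 f) (hg : ContDiff ℝ 1 g)
    (hfconv : ConvexOn ℝ Set.univ f) (hgconv : ConvexOn ℝ Set.univ g)
    (A : Matrix (Fin m) (Fin n) ℝ) (hA : A.rank = n)
    (V : EuclideanSpace ℝ (Fin n) → ℝ)
    (hV : ∀ x, V x = f x + g (Matrix.toEuclideanLin A x))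
    (r : ℝ) (hr : 1 < r)
    (t₀ : ℝ) (ht₀ : 0 < t₀)
    (X X' X'' : ℝ → EuclideanSpace ℝ (Fin n))
    (hX : ∀ t ∈ Set.Ici t₀, HasDerivAt X (X' t) t)
    (hX' : ∀ t ∈ Set.Ici t₀, HasDerivAt X' (X'' t) t)
    (hX'' : ContinuousOn X'' (Set.Ici t₀))
    (hflow : ∀ t ∈ Set.Ici t₀,
      Matrix.toEuclideanLin (Aᵀ * A) (X'' t + (r / t) • X' t) + gradient V (X t) = 0)
    (Xstar : EuclideanSpace ℝ (Fin n)) (hXstar : ∀ x, V Xstar ≤ V x)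
    (E : ℝ → ℝ)
    (hE : ∀ t, E t = (t / (r - 1)) ^ 2 * (V (X t) - V Xstar)
      + (1 / 2) *
        ‖Matrix.toEuclideanLin A (X t - Xstar + (t / (r - 1)) • X' t)‖ ^ 2) :
    (∀ t ∈ Set.Ici t₀, ∃ d : ℝ, HasDerivAt E d t ∧
        d ≤ -(t * (r - 3) / (r - 1) ^ 2) * (V (X t) - V Xstar)) ∧
      (3 ≤ r → AntitoneOn E (Set.Ici t₀)) :=
  aadmm_flow_lyapunov_derivative_bound_general f g hf hg hfconv hgconv A V hV r hr t₀ ht₀ X X' X''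
    hX hX' hflow Xstar hXstar E hE
end

section
/- Let r > 0 and let X : I → ℝⁿ be a twice continuously differentiable solution of the A-ADMM flow AᵀA (Ẍ(t) + (r/t) Ẋ(t)) + ∇V(X(t)) = 0 on an interval I ⊆ (0, ∞). Then for every t ∈ I, the derivative of t ↦ ½‖A Ẋ(t)‖² + V(X(t)) equals −(r/t)‖A Ẋ(t)‖². -/
/-!
Along the flow, `d/dt ½‖AẊ‖² = ⟪AᵀA Ẍ, Ẋ⟫` and `d/dt V(X) = ⟪∇V(X), Ẋ⟫ = -⟪AᵀA (Ẍ + (r/t) Ẋ), Ẋ⟫`;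
the `Ẍ` terms cancel because `⟪AᵀA u, v⟫ = ⟪Au, Av⟫`, leaving `-(r/t) ‖AẊ‖²`.
-/

open Matrix

open RealInnerProductSpace in
theorem hasDerivAt_half_norm_sq_add_of_damped_flow {E F : Type*}
    [NormedAddCommGroup E] [InnerProductSpace ℝ E] [CompleteSpace E]
    [NormedAddCommGroup F] [InnerProductSpace ℝ F] [CompleteSpace F]
    (L : E →L[ℝ] F) {V : E → ℝ} {X X' : ℝ → E} {x'' G : E} {c t : ℝ}
    (hX : HasDerivAt X (X' t) t) (hX' : HasDerivAt X' x'' t) (hV : HasGradientAt V G (X t))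
    (hflow : (L.adjoint ∘L L) (x'' + c • X' t) + G = 0) :
    HasDerivAt (fun s => 1 / 2 * ‖L (X' s)‖ ^ 2 + V (X s)) (-c * ‖L (X' t)‖ ^ 2) t := by
  have hkin := ((L.hasFDerivAt.comp_hasDerivAt t hX').norm_sq).const_mul (1 / 2 : ℝ)
  have hpot := hV.hasFDerivAt.comp_hasDerivAt t hX
  refine (hkin.add hpot).congr_deriv ?_
  have hgrad : ⟪G, X' t⟫ = -⟪L x'' + c • L (X' t), L (X' t)⟫ := by
    rw [eq_neg_of_add_eq_zero_right hflow, inner_neg_left, ContinuousLinearMap.comp_apply,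
      ContinuousLinearMap.adjoint_inner_left, map_add, map_smul]
  simp only [Function.comp_apply, InnerProductSpace.toDual_apply_apply, hgrad, inner_add_left,
    real_inner_smul_left, real_inner_self_eq_norm_sq, real_inner_comm (L x'')]
  ring

theorem Matrix.adjoint_comp_toEuclideanLin {m n : Type*} [Fintype m] [DecidableEq m]
    [Fintype n] [DecidableEq n] (A : Matrix m n ℝ) :
    (toEuclideanLin A).toContinuousLinearMap.adjoint ∘L (toEuclideanLin A).toContinuousLinearMap
      = (toEuclideanLin (Aᵀ * A)).toContinuousLinearMap := by
  ext1 v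
  rw [← LinearMap.adjoint_toContinuousLinearMap, ← toEuclideanLin_conjTranspose_eq_adjoint]
  simp [toLpLin_apply, mulVec_mulVec]

theorem aadmm_flow_energy_dissipation_general
    {m n : ℕ}
    (f : EuclideanSpace ℝ (Fin n) → ℝ) (g : EuclideanSpace ℝ (Fin m) → ℝ)
    (hf : ContDiff ℝ 1 f) (hg : ContDiff ℝ 1 g)
    (A : Matrix (Fin m) (Fin n) ℝ)
    (V : EuclideanSpace ℝ (Fin n) → ℝ)
    (hV : ∀ x, V x = f x + g (Matrix.toEuclideanLin A x))
    (r : ℝ)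
    (I : Set ℝ)
    (X X' X'' : ℝ → EuclideanSpace ℝ (Fin n))
    (hX : ∀ t ∈ I, HasDerivAt X (X' t) t)
    (hX' : ∀ t ∈ I, HasDerivAt X' (X'' t) t)
    (hflow : ∀ t ∈ I,
      Matrix.toEuclideanLin (Aᵀ * A) (X'' t + (r / t) • X' t) + gradient V (X t) = 0) :
    ∀ t ∈ I,
      HasDerivAt (fun s => (1 / 2) * ‖Matrix.toEuclideanLin A (X' s)‖ ^ 2 + V (X s))
        (-(r / t) * ‖Matrix.toEuclideanLin A (X' t)‖ ^ 2) t := by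
  intro t ht
  have hVdiff : Differentiable ℝ V := by
    rw [show V = fun x => f x + g (toEuclideanLin A x) from funext hV]
    exact (hf.differentiable one_ne_zero).add
      ((hg.differentiable one_ne_zero).comp (toEuclideanLin A).toContinuousLinearMap.differentiable)
  refine hasDerivAt_half_norm_sq_add_of_damped_flow (toEuclideanLin A).toContinuousLinearMap
    (hX t ht) (hX' t ht) (hVdiff _).hasGradientAt ?_
  rw [adjoint_comp_toEuclideanLin]
  exact hflow t ht

/-- **Energy dissipation along the A-ADMM flow.**
Let `r > 0` and let `X` be a twice continuously differentiable solution of the A-ADMM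
flow `AᵀA(Ẍ(t) + (r/t)Ẋ(t)) + ∇V(X(t)) = 0` on an interval `I ⊆ (0, ∞)`. Then for
every `t ∈ I`, the derivative of `t ↦ ½‖AẊ(t)‖² + V(X(t))` equals `−(r/t)‖AẊ(t)‖²`. -/
theorem aadmm_flow_energy_dissipation
    {m n : ℕ} (hmn : n ≤ m)
    (f : EuclideanSpace ℝ (Fin n) → ℝ) (g : EuclideanSpace ℝ (Fin m) → ℝ)
    (hf : ContDiff ℝ 1 f) (hg : ContDiff ℝ 1 g)
    (hfconv : ConvexOn ℝ Set.univ f) (hgconv : ConvexOn ℝ Set.univ g)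
    (A : Matrix (Fin m) (Fin n) ℝ) (hA : A.rank = n)
    (V : EuclideanSpace ℝ (Fin n) → ℝ)
    (hV : ∀ x, V x = f x + g (Matrix.toEuclideanLin A x))
    (r : ℝ) (hr : 0 < r)
    (I : Set ℝ) (hI : I.OrdConnected) (hIpos : I ⊆ Set.Ioi (0 : ℝ))
    (X X' X'' : ℝ → EuclideanSpace ℝ (Fin n))
    (hX : ∀ t ∈ I, HasDerivAt X (X' t) t)
    (hX' : ∀ t ∈ I, HasDerivAt X' (X'' t) t)
    (hX'' : ContinuousOn X'' I)
    (hflow : ∀ t ∈ I,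
      Matrix.toEuclideanLin (Aᵀ * A) (X'' t + (r / t) • X' t) + gradient V (X t) = 0) :
    ∀ t ∈ I,
      HasDerivAt (fun s => (1 / 2) * ‖Matrix.toEuclideanLin A (X' s)‖ ^ 2 + V (X s))
        (-(r / t) * ‖Matrix.toEuclideanLin A (X' t)‖ ^ 2) t :=
  aadmm_flow_energy_dissipation_general f g hf hg A V hV r I X X' X'' hX hX' hflow
end

section
/- Let r ≥ 3, let X : [t₀, ∞) → ℝⁿ (with t₀ > 0) be a twice continuously differentiable solution of the A-ADMM flow AᵀA (Ẍ(t) + (r/t) Ẋ(t)) + ∇V(X(t)) = 0, and let X⋆ be a minimizer of V. Suppose there is a function φ : [0, ∞) → [0, ∞) such that V(X) − V(X⋆) ≥ φ(‖X − X⋆‖) for all X ∈ ℝⁿ, and such that for every sequence (ξ_k) in [0, ∞), φ(ξ_k) → 0 implies ξ_k → 0. Then X(t) → X⋆ and Ẋ(t) → 0 as t → ∞. -/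
/-!
For `r ≥ 3` the energy `E(t) = t² (V(X t) - V X⋆) + ½ ‖A ((r - 1)(X t - X⋆) + t Ẋ t)‖²` is
nonincreasing along the flow: the flow equation gives
`E'(t) = 2t (V(X t) - V X⋆) - (r - 1) t ⟪∇V(X t), X t - X⋆⟫`, and convexity of `V` gives
`V(X t) - V X⋆ ≤ ⟪∇V(X t), X t - X⋆⟫`. Hence `V(X t) - V X⋆ ≤ E(t₀)/t²`, which the forcing
function turns into `X t → X⋆`. The second term of `E` keeps `A (t Ẋ t)` bounded, so
`A (Ẋ t) → 0`, and `Ẋ t → 0` because `A` is injective.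
-/

open Matrix Set Filter
open scoped RealInnerProductSpace Topology

theorem ConvexOn.sub_le_inner_gradient {E : Type*} [NormedAddCommGroup E]
    [InnerProductSpace ℝ E] [CompleteSpace E] {V : E → ℝ} (hV : ConvexOn ℝ univ V) {x : E}
    (hVx : DifferentiableAt ℝ V x) (y : E) :
    V x - V y ≤ ⟪gradient V x, x - y⟫ := by
  have hq : HasDerivAt (V ∘ AffineMap.lineMap x y) ⟪gradient V x, y - x⟫ (0 : ℝ) := by
    have := hVx.hasGradientAt.hasFDerivAt.comp_hasDerivAt_of_eq (0 : ℝ)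
      AffineMap.hasDerivAt_lineMap (AffineMap.lineMap_apply_zero x y).symm
    simpa using this
  have := (hV.comp_affineMap (AffineMap.lineMap x y)).le_slope_of_hasDerivAt
    (mem_univ 0) (mem_univ 1) zero_lt_one hq
  rw [← neg_sub y x, inner_neg_right]
  simp only [slope_def_field, Function.comp_apply, AffineMap.lineMap_apply_zero,
    AffineMap.lineMap_apply_one, sub_zero, div_one] at this
  linarith

theorem tendsto_zero_of_forcing {α : Type*} {l : Filter α} [l.IsCountablyGenerated]
    {φ : ℝ → ℝ} (hφ : ∀ ξ : ℕ → ℝ, (∀ k, 0 ≤ ξ k) →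
      Tendsto (fun k => φ (ξ k)) atTop (𝓝 0) → Tendsto ξ atTop (𝓝 0))
    {u : α → ℝ} (hu : ∀ a, 0 ≤ u a) (hφu : Tendsto (fun a => φ (u a)) l (𝓝 0)) :
    Tendsto u l (𝓝 0) :=
  tendsto_iff_seq_tendsto.mpr fun v hv => hφ (u ∘ v) (fun k => hu (v k)) (hφu.comp hv)

section AADMMFlow

variable {E F : Type*} [NormedAddCommGroup E] [InnerProductSpace ℝ E]
  [NormedAddCommGroup F] [InnerProductSpace ℝ F]

noncomputable def aadmmEnergy (B : E →ₗ[ℝ] F) (V : E → ℝ) (r : ℝ) (xstar : E) (X X' : ℝ → E)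
    (t : ℝ) : ℝ :=
  t ^ 2 * (V (X t) - V xstar) + 1 / 2 * ‖B ((r - 1) • (X t - xstar) + t • X' t)‖ ^ 2

variable {B : E →ₗ[ℝ] F} {V : E → ℝ} {r t₀ : ℝ} {X X' X'' : ℝ → E}

theorem tendsto_of_aadmmEnergy_le_of_forcing {xstar : E} {C : ℝ}
    (hE : ∀ᶠ t in atTop, aadmmEnergy B V r xstar X X' t ≤ C)
    {φ : ℝ → ℝ} (hφnonneg : ∀ s, 0 ≤ s → 0 ≤ φ s)
    (hforcing : ∀ x, φ ‖x - xstar‖ ≤ V x - V xstar)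
    (hφ : ∀ ξ : ℕ → ℝ, (∀ k, 0 ≤ ξ k) →
      Tendsto (fun k => φ (ξ k)) atTop (𝓝 0) → Tendsto ξ atTop (𝓝 0)) :
    Tendsto X atTop (𝓝 xstar) := by
  have hgap : ∀ᶠ t in atTop, V (X t) - V xstar ≤ C / t ^ 2 := by
    filter_upwards [hE, eventually_gt_atTop 0] with t ht ht0
    rw [le_div_iff₀ (by positivity), mul_comm]
    unfold aadmmEnergy at ht
    nlinarith [sq_nonneg ‖B ((r - 1) • (X t - xstar) + t • X' t)‖]
  have hφX : Tendsto (fun t => φ ‖X t - xstar‖) atTop (𝓝 0) :=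
    squeeze_zero' (Eventually.of_forall fun t => hφnonneg _ (norm_nonneg _))
      (hgap.mono fun t ht => (hforcing (X t)).trans ht)
      (tendsto_const_nhds.div_atTop (tendsto_pow_atTop two_ne_zero))
  exact tendsto_iff_norm_sub_tendsto_zero.mpr
    (tendsto_zero_of_forcing hφ (fun _ => norm_nonneg _) hφX)

variable [FiniteDimensional ℝ E]

theorem tendsto_zero_of_aadmmEnergy_le (hB : Function.Injective B) {xstar : E}
    (hxstar : ∀ x, V xstar ≤ V x) {C : ℝ}
    (hE : ∀ᶠ t in atTop, aadmmEnergy B V r xstar X X' t ≤ C) (hX : Tendsto X atTop (𝓝 xstar)) :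
    Tendsto X' atTop (𝓝 0) := by
  set W : ℝ → F := fun t => B ((r - 1) • (X t - xstar) + t • X' t)
  have hW : ∀ᶠ t in atTop, ‖W t‖ ≤ √(2 * C) := by
    filter_upwards [hE, eventually_ge_atTop 0] with t ht ht0
    unfold aadmmEnergy at ht
    have := mul_nonneg (sq_nonneg t) (sub_nonneg.mpr (hxstar (X t)))
    simpa using Real.abs_le_sqrt (by linarith : ‖W t‖ ^ 2 ≤ 2 * C)
  have hBc : Continuous B := B.continuous_of_finiteDimensional
  have hBX : Tendsto (fun t => B (X t - xstar)) atTop (𝓝 0) := by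
    have := (hBc.tendsto 0).comp (tendsto_sub_nhds_zero_iff.mpr hX)
    rwa [map_zero] at this
  have hsplit :
      Tendsto (fun t => t⁻¹ • W t - ((r - 1) * t⁻¹) • B (X t - xstar)) atTop (𝓝 0) := by
    have h₁ := tendsto_inv_atTop_zero.zero_smul_isBoundedUnder_le
      (isBoundedUnder_of_eventually_le hW)
    have h₂ := (tendsto_inv_atTop_zero.const_mul (r - 1)).smul hBX
    simpa using h₁.sub h₂
  have hBX' : Tendsto (fun t => B (X' t)) atTop (𝓝 0) := by
    refine hsplit.congr' ?_
    filter_upwards [eventually_gt_atTop 0] with t ht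
    simp only [W, map_add, map_smul, smul_add, smul_smul, mul_comm (r - 1)]
    rw [inv_mul_cancel₀ ht.ne', one_smul]
    abel
  have hemb := LinearMap.isClosedEmbedding_of_injective (LinearMap.ker_eq_bot.mpr hB)
  exact hemb.isEmbedding.tendsto_nhds_iff.mpr (by rw [map_zero]; exact hBX')

variable [FiniteDimensional ℝ F]

structure IsAADMMFlow (B : E →ₗ[ℝ] F) (V : E → ℝ) (r t₀ : ℝ) (X X' X'' : ℝ → E) : Prop where
  hasDerivAt : ∀ t ∈ Ici t₀, HasDerivAt X (X' t) t
  hasDerivAt_deriv : ∀ t ∈ Ici t₀, HasDerivAt X' (X'' t) t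
  eq : ∀ t ∈ Ici t₀, B.adjoint (B (X'' t + (r / t) • X' t)) + gradient V (X t) = 0

theorem IsAADMMFlow.hasDerivAt_aadmmEnergy (h : IsAADMMFlow B V r t₀ X X' X'') (xstar : E)
    {t : ℝ} (ht : t ∈ Ici t₀) (ht0 : t ≠ 0) (hV : DifferentiableAt ℝ V (X t)) :
    HasDerivAt (aadmmEnergy B V r xstar X X')
      (2 * t * (V (X t) - V xstar) - (r - 1) * t * ⟪gradient V (X t), X t - xstar⟫) t := by
  set W : ℝ → E := fun s => (r - 1) • (X s - xstar) + s • X' s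
  set U : E := X'' t + (r / t) • X' t
  have hW : HasDerivAt W (t • U) t := by
    refine ((((h.hasDerivAt t ht).sub_const xstar).const_smul (r - 1)).add
      ((hasDerivAt_id t).smul (h.hasDerivAt_deriv t ht))).congr_deriv ?_
    simp only [U, smul_add, smul_smul, mul_div_cancel₀ _ ht0, id]
    module
  have hBW : HasDerivAt (fun s => ‖B (W s)‖ ^ 2) (2 * ⟪B (W t), B (t • U)⟫) t :=
    (B.toContinuousLinearMap.hasFDerivAt.comp_hasDerivAt t hW).norm_sq
  have hVX : HasDerivAt (fun s => V (X s)) ⟪gradient V (X t), X' t⟫ t := by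
    have := hV.hasGradientAt.hasFDerivAt.comp_hasDerivAt t (h.hasDerivAt t ht)
    rwa [InnerProductSpace.toDual_apply_apply] at this
  have hBU : B.adjoint (B U) = -gradient V (X t) := eq_neg_of_add_eq_zero_left (h.eq t ht)
  have hkey : ⟪B (W t), B (t • U)⟫ = -t * ⟪W t, gradient V (X t)⟫ := by
    rw [map_smul, inner_smul_right, ← LinearMap.adjoint_inner_right, hBU, inner_neg_right]
    ring
  refine (((hasDerivAt_pow 2 t).mul (hVX.sub_const (V xstar))).add
    (hBW.const_mul (1 / 2))).congr_deriv ?_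
  rw [hkey]
  simp only [W, inner_add_left, real_inner_smul_left, real_inner_comm (X' t),
    real_inner_comm (X t - xstar)]
  push_cast
  ring

theorem IsAADMMFlow.antitoneOn_aadmmEnergy (h : IsAADMMFlow B V r t₀ X X' X'')
    (hV : Differentiable ℝ V) (hVconv : ConvexOn ℝ univ V) (hr : 3 ≤ r) (ht₀ : 0 < t₀)
    {xstar : E} (hxstar : ∀ x, V xstar ≤ V x) :
    AntitoneOn (aadmmEnergy B V r xstar X X') (Ici t₀) := by
  have hE : ∀ t ∈ Ici t₀, HasDerivAt (aadmmEnergy B V r xstar X X')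
      (2 * t * (V (X t) - V xstar) - (r - 1) * t * ⟪gradient V (X t), X t - xstar⟫) t :=
    fun t ht => h.hasDerivAt_aadmmEnergy xstar ht (ht₀.trans_le ht).ne' (hV _)
  refine antitoneOn_of_hasDerivWithinAt_nonpos (convex_Ici t₀)
    (fun t ht => (hE t ht).continuousAt.continuousWithinAt)
    (fun t ht => (hE t (interior_subset ht)).hasDerivWithinAt) fun t ht => ?_
  have ht : 0 < t := ht₀.trans_le (interior_subset ht)
  have hgap := hVconv.sub_le_inner_gradient (hV (X t)) xstar
  have hgap_nonneg : 0 ≤ V (X t) - V xstar := sub_nonneg.mpr (hxstar _)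
  nlinarith [mul_le_mul_of_nonneg_left hgap (by linarith : 0 ≤ 2 * t),
    mul_nonneg (mul_nonneg (by linarith : 0 ≤ r - 3) ht.le) (hgap_nonneg.trans hgap)]

theorem IsAADMMFlow.tendsto_of_forcing (h : IsAADMMFlow B V r t₀ X X' X'')
    (hB : Function.Injective B) (hV : Differentiable ℝ V) (hVconv : ConvexOn ℝ univ V)
    (hr : 3 ≤ r) (ht₀ : 0 < t₀) {xstar : E} (hxstar : ∀ x, V xstar ≤ V x)
    {φ : ℝ → ℝ} (hφnonneg : ∀ s, 0 ≤ s → 0 ≤ φ s)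
    (hforcing : ∀ x, φ ‖x - xstar‖ ≤ V x - V xstar)
    (hφ : ∀ ξ : ℕ → ℝ, (∀ k, 0 ≤ ξ k) →
      Tendsto (fun k => φ (ξ k)) atTop (𝓝 0) → Tendsto ξ atTop (𝓝 0)) :
    Tendsto X atTop (𝓝 xstar) ∧ Tendsto X' atTop (𝓝 0) := by
  have hE : ∀ᶠ t in atTop, aadmmEnergy B V r xstar X X' t ≤ aadmmEnergy B V r xstar X X' t₀ :=
    (eventually_ge_atTop t₀).mono fun t ht =>
      h.antitoneOn_aadmmEnergy hV hVconv hr ht₀ hxstar self_mem_Ici ht ht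
  have hX := tendsto_of_aadmmEnergy_le_of_forcing hE hφnonneg hforcing hφ
  exact ⟨hX, tendsto_zero_of_aadmmEnergy_le hB hxstar hE hX⟩

end AADMMFlow

namespace Matrix

variable {m n : Type*} [Fintype n] [DecidableEq n]

theorem injective_toEuclideanLin_of_rank_eq {𝕜 : Type*} [RCLike 𝕜] {A : Matrix m n 𝕜}
    (hA : A.rank = Fintype.card n) :
    Function.Injective (toEuclideanLin A) := by
  have hcols : LinearIndependent 𝕜 A.col := by
    rw [linearIndependent_iff_card_eq_finrank_span, ← hA, rank_eq_finrank_span_cols]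
    rfl
  intro v w hvw
  exact WithLp.ofLp_injective 2 <| mulVec_injective_iff.mpr hcols <| congrArg WithLp.ofLp hvw

theorem toEuclideanLin_transpose_mul_self_apply_s9 [Fintype m] [DecidableEq m] (A : Matrix m n ℝ)
    (v : EuclideanSpace ℝ n) :
    toEuclideanLin (Aᵀ * A) v = (toEuclideanLin A).adjoint (toEuclideanLin A v) := by
  rw [← conjTranspose_eq_transpose_of_trivial, ← toEuclideanLin_conjTranspose_eq_adjoint]
  simp [toLpLin_apply, mulVec_mulVec]

end Matrix

theorem aadmm_flow_trajectory_convergence_general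
    {m n : ℕ}
    (f : EuclideanSpace ℝ (Fin n) → ℝ) (g : EuclideanSpace ℝ (Fin m) → ℝ)
    (hf : ContDiff ℝ 1 f) (hg : ContDiff ℝ 1 g)
    (hfconv : ConvexOn ℝ Set.univ f) (hgconv : ConvexOn ℝ Set.univ g)
    (A : Matrix (Fin m) (Fin n) ℝ) (hA : A.rank = n)
    (V : EuclideanSpace ℝ (Fin n) → ℝ)
    (hV : ∀ x, V x = f x + g (Matrix.toEuclideanLin A x))
    (r : ℝ) (hr : 3 ≤ r)
    (t₀ : ℝ) (ht₀ : 0 < t₀)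
    (X X' X'' : ℝ → EuclideanSpace ℝ (Fin n))
    (hX : ∀ t ∈ Set.Ici t₀, HasDerivAt X (X' t) t)
    (hX' : ∀ t ∈ Set.Ici t₀, HasDerivAt X' (X'' t) t)
    (hflow : ∀ t ∈ Set.Ici t₀,
      Matrix.toEuclideanLin (Aᵀ * A) (X'' t + (r / t) • X' t) + gradient V (X t) = 0)
    (Xstar : EuclideanSpace ℝ (Fin n)) (hXstar : ∀ x, V Xstar ≤ V x)
    (φ : ℝ → ℝ) (hφnonneg : ∀ s, 0 ≤ s → 0 ≤ φ s)
    (hforcing : ∀ x, φ ‖x - Xstar‖ ≤ V x - V Xstar)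
    (hφforce : ∀ ξ : ℕ → ℝ, (∀ k, 0 ≤ ξ k) →
      Tendsto (fun k => φ (ξ k)) atTop (nhds 0) → Tendsto ξ atTop (nhds 0)) :
    Tendsto X atTop (nhds Xstar) ∧ Tendsto X' atTop (nhds 0) := by
  set B := Matrix.toEuclideanLin A
  have hVeq : V = fun x => f x + g (B x) := funext hV
  have hB : Function.Injective B :=
    Matrix.injective_toEuclideanLin_of_rank_eq (by rwa [Fintype.card_fin])
  have hVd : Differentiable ℝ V := hVeq ▸
    (hf.differentiable one_ne_zero).add
      ((hg.differentiable one_ne_zero).comp B.toContinuousLinearMap.differentiable)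
  have hVconv : ConvexOn ℝ univ V := hVeq ▸ hfconv.add (hgconv.comp_linearMap B)
  have hsol : IsAADMMFlow B V r t₀ X X' X'' :=
    ⟨hX, hX', fun t ht => by
      rw [← Matrix.toEuclideanLin_transpose_mul_self_apply_s9]; exact hflow t ht⟩
  exact hsol.tendsto_of_forcing hB hVd hVconv hr ht₀ hXstar hφnonneg hforcing hφforce

/-- **Convergence of trajectories of the A-ADMM flow under a forcing condition.**
Let `r ≥ 3`, let `X` be a twice continuously differentiable solution of the A-ADMM flow
`AᵀA(Ẍ(t) + (r/t)Ẋ(t)) + ∇V(X(t)) = 0` on `[t₀, ∞)` (with `t₀ > 0`), and let `X⋆` be a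
minimizer of `V`. Suppose `φ : [0, ∞) → [0, ∞)` is a forcing function, i.e.
`V(X) − V(X⋆) ≥ φ(‖X − X⋆‖)` for all `X`, and for every sequence `(ξ_k) ⊆ [0, ∞)`,
`φ(ξ_k) → 0` implies `ξ_k → 0`. Then `X(t) → X⋆` and `Ẋ(t) → 0` as `t → ∞`. -/
theorem aadmm_flow_trajectory_convergence
    {m n : ℕ} (hmn : n ≤ m)
    (f : EuclideanSpace ℝ (Fin n) → ℝ) (g : EuclideanSpace ℝ (Fin m) → ℝ)
    (hf : ContDiff ℝ 1 f) (hg : ContDiff ℝ 1 g)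
    (hfconv : ConvexOn ℝ Set.univ f) (hgconv : ConvexOn ℝ Set.univ g)
    (A : Matrix (Fin m) (Fin n) ℝ) (hA : A.rank = n)
    (V : EuclideanSpace ℝ (Fin n) → ℝ)
    (hV : ∀ x, V x = f x + g (Matrix.toEuclideanLin A x))
    (r : ℝ) (hr : 3 ≤ r)
    (t₀ : ℝ) (ht₀ : 0 < t₀)
    (X X' X'' : ℝ → EuclideanSpace ℝ (Fin n))
    (hX : ∀ t ∈ Set.Ici t₀, HasDerivAt X (X' t) t)
    (hX' : ∀ t ∈ Set.Ici t₀, HasDerivAt X' (X'' t) t)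
    (hX'' : ContinuousOn X'' (Set.Ici t₀))
    (hflow : ∀ t ∈ Set.Ici t₀,
      Matrix.toEuclideanLin (Aᵀ * A) (X'' t + (r / t) • X' t) + gradient V (X t) = 0)
    (Xstar : EuclideanSpace ℝ (Fin n)) (hXstar : ∀ x, V Xstar ≤ V x)
    (φ : ℝ → ℝ) (hφnonneg : ∀ s, 0 ≤ s → 0 ≤ φ s)
    (hforcing : ∀ x, φ ‖x - Xstar‖ ≤ V x - V Xstar)
    (hφforce : ∀ ξ : ℕ → ℝ, (∀ k, 0 ≤ ξ k) →
      Tendsto (fun k => φ (ξ k)) atTop (nhds 0) → Tendsto ξ atTop (nhds 0)) :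
    Tendsto X atTop (nhds Xstar) ∧ Tendsto X' atTop (nhds 0) :=
  aadmm_flow_trajectory_convergence_general f g hf hg hfconv hgconv A hA V hV r hr t₀ ht₀ X X' X''
    hX hX' hflow Xstar hXstar φ hφnonneg hforcing hφforce
end

section
/- Let ρ > 0 and z, u ∈ ℝᵐ. If x⁺ ∈ ℝⁿ is a minimizer of x ↦ f(x) + (ρ/2)‖Ax − z + u‖² and z⁺ ∈ ℝᵐ is a minimizer of ζ ↦ g(ζ) + (ρ/2)‖Ax⁺ − ζ + u‖², then ∇f(x⁺) + Aᵀ∇g(z⁺) + ρ Aᵀ(z⁺ − z) = 0. -/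
/-! Both subproblems are unconstrained minimizations of smooth functions, so their gradients
vanish at the minimizers. The `ζ`-step gives `∇g(z⁺) = ρ (Ax⁺ − z⁺ + u)`; substituting this into
the `x`-step condition `∇f(x⁺) + ρ Aᵀ(Ax⁺ − z + u) = 0` yields the claim, since
`Ax⁺ − z + u = (Ax⁺ − z⁺ + u) + (z⁺ − z)`. -/

open Matrix

section

variable {E F : Type*} [NormedAddCommGroup E] [InnerProductSpace ℝ E] [FiniteDimensional ℝ E]
  [NormedAddCommGroup F] [InnerProductSpace ℝ F] [FiniteDimensional ℝ F]

theorem HasGradientAt.eq_zero_of_forall_le {φ : E → ℝ} {x d : E} (h : HasGradientAt φ d x)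
    (hmin : ∀ y, φ x ≤ φ y) : d = 0 := by
  have hloc : IsLocalMin φ x := Filter.Eventually.of_forall hmin
  exact (InnerProductSpace.toDual ℝ E).injective
    (by rw [map_zero]; exact hloc.hasFDerivAt_eq_zero h.hasFDerivAt)

theorem hasGradientAt_half_mul_norm_sq_affine (T : E →ₗ[ℝ] F) (c : F) (ρ : ℝ) (x : E) :
    HasGradientAt (fun y ↦ ρ / 2 * ‖T y + c‖ ^ 2) (ρ • LinearMap.adjoint T (T x + c)) x := by
  have hT : HasFDerivAt (fun y ↦ T y) (LinearMap.toContinuousLinearMap T) x :=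
    (LinearMap.toContinuousLinearMap T).hasFDerivAt
  rw [hasGradientAt_iff_hasFDerivAt]
  refine ((hT.add_const c).norm_sq.const_mul (ρ / 2)).congr_fderiv ?_
  ext h
  simp [LinearMap.adjoint_inner_left]
  ring

theorem gradient_add_smul_adjoint_eq_zero_of_forall_le {φ : E → ℝ} {x : E}
    (hφ : DifferentiableAt ℝ φ x) (T : E →ₗ[ℝ] F) (c : F) (ρ : ℝ)
    (hmin : ∀ y, φ x + ρ / 2 * ‖T x + c‖ ^ 2 ≤ φ y + ρ / 2 * ‖T y + c‖ ^ 2) :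
    gradient φ x + ρ • LinearMap.adjoint T (T x + c) = 0 := by
  refine HasGradientAt.eq_zero_of_forall_le (φ := fun y ↦ φ y + ρ / 2 * ‖T y + c‖ ^ 2) ?_ hmin
  rw [hasGradientAt_iff_hasFDerivAt, map_add]
  exact hφ.hasGradientAt.hasFDerivAt.add
    (hasGradientAt_half_mul_norm_sq_affine T c ρ x).hasFDerivAt

end

theorem admm_subproblem_optimality_general
    {m n : ℕ}
    (f : EuclideanSpace ℝ (Fin n) → ℝ) (g : EuclideanSpace ℝ (Fin m) → ℝ)
    (hf : ContDiff ℝ 1 f) (hg : ContDiff ℝ 1 g)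
    (A : Matrix (Fin m) (Fin n) ℝ)
    (ρ : ℝ) (z u : EuclideanSpace ℝ (Fin m))
    (xp : EuclideanSpace ℝ (Fin n))
    (hxp : ∀ x, f xp + (ρ / 2) * ‖Matrix.toEuclideanLin A xp - z + u‖ ^ 2
      ≤ f x + (ρ / 2) * ‖Matrix.toEuclideanLin A x - z + u‖ ^ 2)
    (zp : EuclideanSpace ℝ (Fin m))
    (hzp : ∀ ζ, g zp + (ρ / 2) * ‖Matrix.toEuclideanLin A xp - zp + u‖ ^ 2
      ≤ g ζ + (ρ / 2) * ‖Matrix.toEuclideanLin A xp - ζ + u‖ ^ 2) :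
    gradient f xp + Matrix.toEuclideanLin Aᵀ (gradient g zp)
      + ρ • Matrix.toEuclideanLin Aᵀ (zp - z) = 0 := by
  set T := Matrix.toEuclideanLin A
  have hAt : Matrix.toEuclideanLin Aᵀ = LinearMap.adjoint T := by
    rw [← Matrix.toEuclideanLin_conjTranspose_eq_adjoint, conjTranspose_eq_transpose_of_trivial]
  have hx := gradient_add_smul_adjoint_eq_zero_of_forall_le (hf.differentiable one_ne_zero xp)
    T (u - z) ρ (by simpa only [sub_add_eq_add_sub, add_sub_assoc] using hxp)
  have hz := gradient_add_smul_adjoint_eq_zero_of_forall_le (hg.differentiable one_ne_zero zp)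
    (-LinearMap.id) (T xp + u) ρ (by simpa [sub_eq_add_neg, add_comm, add_left_comm] using hzp)
  have hgz : gradient g zp = ρ • (T xp - zp + u) := by
    simp only [map_neg, LinearMap.IsSymmetric.id, LinearMap.IsSymmetric.adjoint_eq,
      LinearMap.neg_apply, LinearMap.id_coe, id_eq, neg_add_rev, neg_neg, smul_add,
      smul_neg] at hz
    rw [eq_neg_of_add_eq_zero_left hz]
    module
  rw [hAt, hgz, map_smul, add_assoc, ← smul_add, ← map_add, ← hx]
  congr 3
  abel

/-- **Combined optimality conditions of the ADMM subproblems.**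
Let `ρ > 0` and `z, u ∈ ℝᵐ`. If `x⁺` minimizes `x ↦ f(x) + (ρ/2)‖Ax − z + u‖²` and
`z⁺` minimizes `ζ ↦ g(ζ) + (ρ/2)‖Ax⁺ − ζ + u‖²`, then
`∇f(x⁺) + Aᵀ∇g(z⁺) + ρAᵀ(z⁺ − z) = 0`. -/
theorem admm_subproblem_optimality
    {m n : ℕ} (hmn : n ≤ m)
    (f : EuclideanSpace ℝ (Fin n) → ℝ) (g : EuclideanSpace ℝ (Fin m) → ℝ)
    (hf : ContDiff ℝ 1 f) (hg : ContDiff ℝ 1 g)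
    (hfconv : ConvexOn ℝ Set.univ f) (hgconv : ConvexOn ℝ Set.univ g)
    (A : Matrix (Fin m) (Fin n) ℝ) (hA : A.rank = n)
    (ρ : ℝ) (hρ : 0 < ρ) (z u : EuclideanSpace ℝ (Fin m))
    (xp : EuclideanSpace ℝ (Fin n))
    (hxp : ∀ x, f xp + (ρ / 2) * ‖Matrix.toEuclideanLin A xp - z + u‖ ^ 2
      ≤ f x + (ρ / 2) * ‖Matrix.toEuclideanLin A x - z + u‖ ^ 2)
    (zp : EuclideanSpace ℝ (Fin m))
    (hzp : ∀ ζ, g zp + (ρ / 2) * ‖Matrix.toEuclideanLin A xp - zp + u‖ ^ 2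
      ≤ g ζ + (ρ / 2) * ‖Matrix.toEuclideanLin A xp - ζ + u‖ ^ 2) :
    gradient f xp + Matrix.toEuclideanLin Aᵀ (gradient g zp)
      + ρ • Matrix.toEuclideanLin Aᵀ (zp - z) = 0 :=
  admm_subproblem_optimality_general f g hf hg A ρ z u xp hxp zp hzp
end
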